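/- arXiv:math/0703477 — 3 statements merged into one kernel-verified Lean document; each statement's English description precedes it below -/
import Mathlib

section
/- Let λ be an uncountable cardinal with λ = λ^{<λ} and let ℚ be the partial order of conditions defined in the context. Then for every increasing sequence ϱ of ordinals < λ⁺, each divisible by λ, of length < λ, the set {p ∈ ℚ : ϱ ∈ Λ^p} is dense in ℚ (every condition has an extension in this set) and upward closed. -/
open Cardinal Set

namespace ShelahQ

/-- A sequence of ordinals of ordinal length `len`, normalized to take the value `0` beyond
its length. -/
structure OSeq : Type 1 where
  len : Ordinal.{0}
  f : Ordinal.{0} → Ordinal.{0}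
  junk : ∀ i, len ≤ i → f i = 0

namespace OSeq

/-- The restriction `ρ ↾ i` of a sequence to its first `i` places. -/
noncomputable def restrict (ρ : OSeq) (i : Ordinal) : OSeq where
  len := min i ρ.len
  f j := if j < min i ρ.len then ρ.f j else 0
  junk := fun k hk => if_neg (not_lt.mpr hk)

/-- `ρ ⊴ σ`: `ρ` is an initial segment of `σ`. -/
def IsPrefix (ρ σ : OSeq) : Prop :=
  ρ.len ≤ σ.len ∧ ∀ i < ρ.len, ρ.f i = σ.f i

/-- `sup Rang(ρ)`. -/
noncomputable def supRang (ρ : OSeq) : Ordinal := sSup (ρ.f '' Set.Iio ρ.len)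

end OSeq

/-- The raw data of a condition of the forcing notion `ℚ` from the proof of Claim 3c.4:
a set `u ⊆ λ⁺`, a linear order `<` on it, two sets `𝔖₁, 𝔖₂` of `ω`-sequences, a set `Λ` of
sequences and, for each `ρ`, the graph `G ρ` of the partial order-automorphism `f_ρ`. -/
structure PreCond : Type 1 where
  u : Set Ordinal.{0}
  lto : Ordinal.{0} → Ordinal.{0} → Prop
  S : Fin 2 → Set (ℕ → Ordinal.{0})
  Lam : Set OSeq
  G : OSeq → Set (Ordinal.{0} × Ordinal.{0})

/-- `Dom (f^{ℓ})`, for `ℓ = 1, 2` (coded by `0, 1`), of the partial function with graph `g`: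
the domain of `f` for `ℓ = 1`, the range of `f` (the domain of `f⁻¹`) for `ℓ = 2`. -/
def domSide (g : Set (Ordinal × Ordinal)) (ℓ : Fin 2) : Set Ordinal :=
  if ℓ = 0 then {a | ∃ b, (a, b) ∈ g} else {b | ∃ a, (a, b) ∈ g}

/-- `f^{ℓ}(a) = b`, for the partial function with graph `g` (`ℓ = 1`: `f`; `ℓ = 2`: `f⁻¹`). -/
def applies (g : Set (Ordinal × Ordinal)) (ℓ : Fin 2) (a b : Ordinal) : Prop :=
  if ℓ = 0 then (a, b) ∈ g else (b, a) ∈ g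

/-- `p` is a condition of the forcing notion `ℚ` (clauses (a)–(l) of `⊛₁` in the proof of
Claim 3c.4). -/
def IsCond (lam : Cardinal.{0}) (p : PreCond) : Prop :=
  -- (a)
  (p.u ⊆ Set.Iio (Order.succ lam).ord) ∧ #p.u < Cardinal.lift.{1} lam ∧
  (∀ α i : Ordinal, i < lam.ord → α + i ∈ p.u → α ∈ p.u) ∧
  -- (b): `<^p` is a linear order of `u^p` with `α + λ ≤ β → α <^p β`
  (∀ α β, p.lto α β → α ∈ p.u ∧ β ∈ p.u) ∧
  (∀ α, ¬ p.lto α α) ∧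
  (∀ α β γ, p.lto α β → p.lto β γ → p.lto α γ) ∧
  (∀ α ∈ p.u, ∀ β ∈ p.u, α ≠ β → p.lto α β ∨ p.lto β α) ∧
  (∀ α ∈ p.u, ∀ β ∈ p.u, α + lam.ord ≤ β → p.lto α β) ∧
  -- (c)
  (∀ ℓ, ∀ η ∈ p.S ℓ, (∀ n, η n ∈ p.u) ∧ ∀ n : ℕ, η n + lam.ord ≤ η (n + 1)) ∧
  (∀ ℓ, ∀ η ∈ p.S ℓ, ∀ ν ∈ p.S ℓ, η ≠ ν → (Set.range η ∩ Set.range ν).Finite) ∧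
  -- (d)
  #p.Lam < Cardinal.lift.{1} lam ∧
  (∀ ρ ∈ p.Lam, ρ.len < lam.ord ∧ (∀ i < ρ.len, ρ.f i ∈ p.u ∧ lam.ord ∣ ρ.f i) ∧
    ∀ i j, i < j → j < ρ.len → ρ.f i < ρ.f j) ∧
  -- (e), (f): each `f_ρ` is a partial automorphism of `(u, <^p)` respecting λ-blocks
  (∀ ρ ∈ p.Lam, ∀ a b : Ordinal, (a, b) ∈ p.G ρ →
    a ∈ p.u ∧ b ∈ p.u ∧ a + lam.ord = b + lam.ord) ∧
  (∀ ρ ∈ p.Lam, ∀ a b b' : Ordinal, (a, b) ∈ p.G ρ → (a, b') ∈ p.G ρ → b = b') ∧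
  (∀ ρ ∈ p.Lam, ∀ a a' b : Ordinal, (a, b) ∈ p.G ρ → (a', b) ∈ p.G ρ → a = a') ∧
  (∀ ρ ∈ p.Lam, ∀ a b a' b' : Ordinal, (a, b) ∈ p.G ρ → (a', b') ∈ p.G ρ →
    (p.lto a a' ↔ p.lto b b')) ∧
  -- (g)
  (∀ ℓ, ∀ ρ ∈ p.Lam, ∀ η ∈ p.S ℓ,
    Set.range η ⊆ domSide (p.G ρ) ℓ ∨ (Set.range η ∩ domSide (p.G ρ) ℓ).Finite) ∧
  -- (h)
  (∀ ρ ∈ p.Lam, ∀ i ≤ ρ.len, ρ.restrict i ∈ p.Lam ∧ p.G (ρ.restrict i) ⊆ p.G ρ) ∧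
  -- (i)
  (∀ ρ ∈ p.Lam, ρ.len = 0 → p.G ρ = ∅) ∧
  (∀ ρ ∈ p.Lam, Order.IsSuccLimit ρ.len → p.G ρ = ⋃ i ∈ Set.Iio ρ.len, p.G (ρ.restrict i)) ∧
  -- (j)
  (∀ ρ ∈ p.Lam, ∀ i : Ordinal, ρ.len = i + 1 → ∀ a b : Ordinal, (a, b) ∈ p.G ρ →
    a < ρ.f i ∧ b < ρ.f i) ∧
  -- (k)
  (∀ ρ ∈ p.Lam, ∀ η ν : ℕ → Ordinal, (∀ n, (η n, ν n) ∈ p.G ρ) →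
    (η ∈ p.S 0 ↔ ν ∈ p.S 1)) ∧
  -- (l)
  (∀ ρ : ℕ → OSeq, (∀ n, ρ n ∈ p.Lam) →
    (∀ n, (ρ n).IsPrefix (ρ (n + 1)) ∧ (ρ n).len < (ρ (n + 1)).len) →
    ∃ σ ∈ p.Lam, (∀ n, (ρ n).IsPrefix σ) ∧ ∀ i < σ.len, ∃ n, i < (ρ n).len)

/-- The order of the forcing notion `ℚ` (clauses (a)–(i) of `⊛₂` in the proof of
Claim 3c.4). -/
def CondLe (lam : Cardinal.{0}) (p q : PreCond) : Prop :=
  -- (a)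
  p.u ⊆ q.u ∧
  -- (b)
  (∀ α ∈ p.u, ∀ β ∈ p.u, (p.lto α β ↔ q.lto α β)) ∧
  -- (c)
  (∀ ℓ, p.S ℓ ⊆ q.S ℓ) ∧
  -- (d)
  p.Lam ⊆ q.Lam ∧
  -- (e)
  (∀ ρ ∈ p.Lam, p.G ρ ⊆ q.G ρ) ∧
  -- (f)
  (∀ ℓ, ∀ η, η ∈ q.S ℓ → η ∉ p.S ℓ → (Set.range η ∩ p.u).Finite) ∧
  -- (g)
  (∀ ρ ∈ p.Lam, p.G ρ ≠ q.G ρ →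
    ∀ ℓ, ∀ α ∈ p.u, α < ρ.supRang → α ∈ domSide (q.G ρ) ℓ) ∧
  -- (h)
  (∀ ρ ∈ p.Lam, ∀ ℓ, ∀ α ∈ p.u, α ∉ domSide (p.G ρ) ℓ →
    ∀ β, applies (q.G ρ) ℓ α β → β ∉ p.u) ∧
  -- (i)
  (∀ n : ℕ, 0 < n → ∀ (ρ : ℕ → OSeq) (ℓv : ℕ → Fin 2) (α : ℕ → Ordinal),
    (∀ k < n, ρ k ∈ p.Lam) → (∀ k ≤ n, α k ∈ q.u) →
    (∀ k < n, applies (q.G (ρ k)) (ℓv k) (α k) (α (k + 1))) →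
    (∀ k, k + 1 < n → ¬ (ℓv k ≠ ℓv (k + 1) ∧ ∃ ρ' : OSeq, ρ'.IsPrefix (ρ k) ∧
      ρ'.IsPrefix (ρ (k + 1)) ∧ α k ∈ domSide (p.G ρ') (ℓv k))) →
    -- (α)
    (α 0 = α n → α 0 ∈ domSide (p.G (ρ 0)) (ℓv 0)) ∧
    -- (β)
    (α 0 ∈ p.u → α 1 ∉ p.u → α n ∉ p.u))

/-- The coordinatewise union of a family of conditions indexed by the ordinals `< δ`. -/
def unionCond (δ : Ordinal.{0}) (p : Ordinal → PreCond) : PreCond where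
  u := ⋃ i ∈ Set.Iio δ, (p i).u
  lto a b := ∃ i < δ, (p i).lto a b
  S ℓ := ⋃ i ∈ Set.Iio δ, (p i).S ℓ
  Lam := ⋃ i ∈ Set.Iio δ, (p i).Lam
  G ρ := {ab | ∃ i < δ, ρ ∈ (p i).Lam ∧ ab ∈ (p i).G ρ}

theorem dvd_add_le {d a b : Ordinal} (hd0 : 0 < d) (habs : ∀ x < d, x + d = d)
    (hb : d ∣ b) (hab : a < b) : a + d ≤ b := by
  obtain ⟨t, rfl⟩ := hb
  have hq : a / d < t := (Ordinal.div_lt hd0.ne').2 hab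
  calc a + d = d * (a / d) + a % d + d := by rw [Ordinal.div_add_mod]
    _ = d * (a / d) + (a % d + d) := by rw [add_assoc]
    _ = d * (a / d) + d := by rw [habs _ (Ordinal.mod_lt a hd0.ne')]
    _ = d * (a / d + 1) := by rw [mul_add, mul_one]
    _ ≤ d * t := by
        apply mul_le_mul_right
        rw [Ordinal.add_one_eq_succ]
        exact Order.succ_le_of_lt hq

theorem dvd_le_of_lt_add {d a c : Ordinal} (hd0 : 0 < d) (habs : ∀ x < d, x + d = d)
    (ha : d ∣ a) (h : a < c + d) : a ≤ c := by
  obtain ⟨s, rfl⟩ := ha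
  have hc : c + d = d * (c / d + 1) := by
    conv_lhs => rw [← Ordinal.div_add_mod c d]
    rw [add_assoc, habs _ (Ordinal.mod_lt c hd0.ne'), mul_add, mul_one]
  rw [hc] at h
  have hs : s ≤ c / d := by
    have := (mul_lt_mul_iff_of_pos_left hd0).1 h
    rwa [Ordinal.add_one_eq_succ, Order.lt_succ_iff] at this
  calc d * s ≤ d * (c / d) := mul_le_mul_right hs d
    _ ≤ c := Ordinal.mul_div_le c d

theorem eq_zero_of_dvd_add {d a i : Ordinal} (hd0 : 0 < d)
    (hadd : ∀ x y, x < d → y < d → x + y < d)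
    (hi : i < d) (hdvd : d ∣ a + i) : i = 0 := by
  obtain ⟨t, ht⟩ := hdvd
  have h1 : d * (a / d) + (a % d + i) = d * t := by
    rw [← add_assoc, Ordinal.div_add_mod]; exact ht
  have hri : a % d + i < d := hadd _ _ (Ordinal.mod_lt a hd0.ne') hi
  have hle1 : a / d ≤ t := by
    have h2 : d * (a / d) ≤ d * t :=
      calc d * (a / d) = d * (a / d) + 0 := (add_zero _).symm
        _ ≤ d * (a / d) + (a % d + i) := add_le_add_right zero_le _
        _ = d * t := h1
    exact (mul_le_mul_iff_of_pos_left hd0).1 h2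
  have hle2 : t ≤ a / d := by
    have h3 : d * t < d * (a / d + 1) := by
      rw [← h1, mul_add, mul_one]
      exact add_lt_add_right hri _
    have := (mul_lt_mul_iff_of_pos_left hd0).1 h3
    rwa [Ordinal.add_one_eq_succ, Order.lt_succ_iff] at this
  rw [le_antisymm hle2 hle1] at h1
  have h4 : a % d + i = 0 := by
    have := (add_right_inj (d * (a / d))).1 (h1.trans (add_zero _).symm)
    exact this
  exact (Ordinal.add_eq_zero_iff.1 h4).2


namespace OSeq
theorem ext' {a b : OSeq} (h1 : a.len = b.len) (h2 : ∀ i < a.len, a.f i = b.f i) : a = b := by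
  obtain ⟨l1, f1, j1⟩ := a
  obtain ⟨l2, f2, j2⟩ := b
  simp only at h1 h2
  subst h1
  have : f1 = f2 := by
    funext i
    by_cases h : i < l1
    · exact h2 i h
    · rw [j1 i (not_lt.1 h), j2 i (not_lt.1 h)]
  subst this
  rfl

@[simp] theorem restrict_len (ρ : OSeq) (i : Ordinal) : (ρ.restrict i).len = min i ρ.len := rfl

theorem restrict_f (ρ : OSeq) {i j : Ordinal} (h : j < min i ρ.len) :
    (ρ.restrict i).f j = ρ.f j := if_pos h

theorem isPrefix_refl (ρ : OSeq) : ρ.IsPrefix ρ := ⟨le_rfl, fun _ _ => rfl⟩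

theorem IsPrefix.trans {ρ σ τ : OSeq} (h1 : ρ.IsPrefix σ) (h2 : σ.IsPrefix τ) :
    ρ.IsPrefix τ :=
  ⟨h1.1.trans h2.1, fun i hi => (h1.2 i hi).trans (h2.2 i (hi.trans_le h1.1))⟩

theorem restrict_isPrefix (ρ : OSeq) (i : Ordinal) : (ρ.restrict i).IsPrefix ρ :=
  ⟨min_le_right _ _, fun j hj => restrict_f ρ hj⟩

theorem prefix_of_prefix {σ₁ σ₂ ρ : OSeq} (h1 : σ₁.IsPrefix ρ) (h2 : σ₂.IsPrefix ρ)
    (h : σ₁.len ≤ σ₂.len) : σ₁.IsPrefix σ₂ :=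
  ⟨h, fun i hi => (h1.2 i hi).trans (h2.2 i (hi.trans_le h)).symm⟩

theorem eq_restrict_of_prefix {σ ρ : OSeq} (h : σ.IsPrefix ρ) : σ = ρ.restrict σ.len := by
  refine ext' (by simp [min_eq_left h.1]) (fun i hi => ?_)
  rw [restrict_f ρ (by simp only [lt_min_iff]; exact ⟨hi, hi.trans_le h.1⟩)]
  exact h.2 i hi

theorem eq_of_prefix_len_le {σ ρ : OSeq} (h : σ.IsPrefix ρ) (hl : ρ.len ≤ σ.len) : σ = ρ :=
  ext' (le_antisymm h.1 hl) h.2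

theorem restrict_min_len (ρ : OSeq) (i : Ordinal) :
    ρ.restrict (min i ρ.len) = ρ.restrict i := by
  refine ext' (by simp [min_assoc]) (fun k hk => ?_)
  simp only [restrict_len, min_assoc, min_self] at hk ⊢
  rw [restrict_f ρ (by simpa using hk), restrict_f ρ (by simpa using hk)]

theorem restrict_self (ρ : OSeq) : ρ.restrict ρ.len = ρ :=
  (eq_restrict_of_prefix (isPrefix_refl ρ)).symm
end OSeq

theorem applies_mem_domSide {g : Set (Ordinal × Ordinal)} {ℓ : Fin 2} {a b : Ordinal}
    (h : applies g ℓ a b) : a ∈ domSide g ℓ := by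
  by_cases hℓ : ℓ = 0 <;>
    [simp only [applies, domSide, if_pos hℓ, Set.mem_setOf_eq] at h ⊢;
     simp only [applies, domSide, if_neg hℓ, Set.mem_setOf_eq] at h ⊢] <;>
    exact ⟨b, h⟩

theorem domSide_mono {g g' : Set (Ordinal × Ordinal)} {ℓ : Fin 2} (h : g ⊆ g') :
    domSide g ℓ ⊆ domSide g' ℓ := by
  by_cases hℓ : ℓ = 0 <;>
    [simp only [domSide, if_pos hℓ]; simp only [domSide, if_neg hℓ]] <;>
    rintro x ⟨b, hb⟩ <;> exact ⟨b, h hb⟩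

theorem mem_domSide_union {ι : Type*} {P : ι → Prop} {H : ι → Set (Ordinal × Ordinal)}
    {ℓ : Fin 2} {a : Ordinal} :
    a ∈ domSide {ab | ∃ s, P s ∧ ab ∈ H s} ℓ ↔ ∃ s, P s ∧ a ∈ domSide (H s) ℓ := by
  by_cases hℓ : ℓ = 0 <;>
    [simp only [domSide, if_pos hℓ, Set.mem_setOf_eq];
     simp only [domSide, if_neg hℓ, Set.mem_setOf_eq]] <;> tauto

theorem G_mono {lam : Cardinal} {p : PreCond} (hp : IsCond lam p) {σ ρ : OSeq}
    (hρ : ρ ∈ p.Lam) (hpre : σ.IsPrefix ρ) : p.G σ ⊆ p.G ρ := by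
  obtain ⟨-,-,-,-,-,-,-,-,-,-,-,-,-,-,-,-,-,hh,-⟩ := hp
  have := (hh ρ hρ σ.len hpre.1).2
  rwa [← OSeq.eq_restrict_of_prefix hpre] at this

theorem prefix_mem_Lam {lam : Cardinal} {p : PreCond} (hp : IsCond lam p) {σ ρ : OSeq}
    (hρ : ρ ∈ p.Lam) (hpre : σ.IsPrefix ρ) : σ ∈ p.Lam := by
  obtain ⟨-,-,-,-,-,-,-,-,-,-,-,-,-,-,-,-,-,hh,-⟩ := hp
  have := (hh ρ hρ σ.len hpre.1).1
  rwa [← OSeq.eq_restrict_of_prefix hpre] at this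

theorem chainG {lam : Cardinal} {p : PreCond} (hp : IsCond lam p) {ρ : OSeq} (σ : ℕ → OSeq)
    (h1 : ∀ n, σ n ∈ p.Lam) (h2 : ∀ n, (σ n).IsPrefix ρ) :
    ∃ τ, τ ∈ p.Lam ∧ τ.IsPrefix ρ ∧ ∀ n, p.G (σ n) ⊆ p.G τ := by
  by_cases hmax : ∃ m, ∀ n, (σ n).len ≤ (σ m).len
  · obtain ⟨m, hm⟩ := hmax
    exact ⟨σ m, h1 m, h2 m, fun n =>
      G_mono hp (h1 m) (OSeq.prefix_of_prefix (h2 n) (h2 m) (hm n))⟩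
  · push_neg at hmax
    choose F hF using hmax
    let g : ℕ → ℕ := fun k => Nat.rec 0 (fun k' gk => F (if (σ k').len ≤ (σ gk).len then gk else k')) k
    have hgsucc : ∀ k, g (k+1) = F (if (σ k).len ≤ (σ (g k)).len then g k else k) := fun _ => rfl
    have hg1 : ∀ k, (σ (g k)).len < (σ (g (k+1))).len := by
      intro k; rw [hgsucc]
      split
      · exact hF _
      · next h => exact (not_le.1 h).trans (hF _)
    have hg2 : ∀ k, (σ k).len < (σ (g (k+1))).len := by
      intro k; rw [hgsucc]
      split
      · next h => exact lt_of_le_of_lt h (hF _)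
      · exact hF _
    obtain ⟨-,-,-,-,-,-,-,-,-,-,-,-,-,-,-,-,-,-,-,-,-,-,hl⟩ := id hp
    obtain ⟨τ, hτ, hτpre, hcf⟩ := hl (fun n => σ (g n)) (fun n => h1 (g n))
      (fun n => ⟨OSeq.prefix_of_prefix (h2 (g n)) (h2 (g (n+1))) (hg1 n).le, hg1 n⟩)
    have hτρ : τ.IsPrefix ρ := by
      constructor
      · by_contra hc
        obtain ⟨k, hk⟩ := hcf ρ.len (not_le.1 hc)
        exact absurd ((h2 (g k)).1) (not_le.2 hk)
      · intro i hi
        obtain ⟨k, hk⟩ := hcf i hi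
        exact ((hτpre k).2 i hk).symm.trans ((h2 (g k)).2 i hk)
    refine ⟨τ, hτ, hτρ, fun n => ?_⟩
    have hlen : (σ n).len ≤ τ.len := (hg2 n).le.trans ((hτpre (n+1)).1)
    exact G_mono hp hτ (OSeq.prefix_of_prefix (h2 n) hτρ hlen)

theorem boundG {lam : Cardinal} {p : PreCond} (hp : IsCond lam p) :
    ∀ σ ∈ p.Lam, ∀ a b : Ordinal, (a, b) ∈ p.G σ →
      ∃ i, i < σ.len ∧ a < σ.f i ∧ b < σ.f i := by
  obtain ⟨-,-,-,-,-,-,-,-,-,-,-,-,-,-,-,-,-,hh,hi0,hilim,hj,-⟩ := id hp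
  suffices H : ∀ L : Ordinal, ∀ σ ∈ p.Lam, σ.len = L → ∀ a b : Ordinal, (a, b) ∈ p.G σ →
      ∃ i, i < σ.len ∧ a < σ.f i ∧ b < σ.f i from
    fun σ hσ => H σ.len σ hσ rfl
  intro L
  induction L using Ordinal.induction with
  | h L IH =>
    intro σ hσ hL a b hab
    rcases Ordinal.zero_or_succ_or_isSuccLimit L with h0 | ⟨i, hsucc⟩ | hlim
    · rw [hi0 σ hσ (hL.trans h0)] at hab
      exact absurd hab (Set.notMem_empty _)
    · have hsucc' : σ.len = i + 1 := by rw [hL, ← hsucc, Ordinal.add_one_eq_succ]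
      obtain ⟨ha, hb⟩ := hj σ hσ i hsucc' a b hab
      refine ⟨i, ?_, ha, hb⟩
      rw [hsucc', Ordinal.add_one_eq_succ]
      exact Order.lt_succ i
    · rw [hilim σ hσ (by rw [hL]; exact hlim)] at hab
      simp only [Set.mem_iUnion, Set.mem_Iio, exists_prop] at hab
      obtain ⟨j, hj', hab'⟩ := hab
      have hjL : j < L := by rwa [← hL]
      have hjσ : j ≤ σ.len := by rw [hL]; exact hjL.le
      have hres := hh σ hσ j hjσ
      have hlenr : (σ.restrict j).len = j := by simp [min_eq_left hjσ]
      obtain ⟨i, hi, ha, hb⟩ := IH j hjL (σ.restrict j) hres.1 hlenr a b hab'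
      rw [hlenr] at hi
      have him : i < min j σ.len := lt_min hi (hi.trans (lt_of_le_of_ne hjσ (by rintro rfl; exact absurd hL (ne_of_lt hjL)))) 
      refine ⟨i, lt_of_lt_of_le him (min_le_right _ _), ?_, ?_⟩
      · rwa [OSeq.restrict_f σ him] at ha
      · rwa [OSeq.restrict_f σ him] at hb

theorem OSeq.restrict_restrict (ρ : OSeq) (i j : Ordinal) :
    (ρ.restrict i).restrict j = ρ.restrict (min j i) := by
  refine OSeq.ext' (by simp [min_assoc]) (fun k hk => ?_)
  simp only [OSeq.restrict_len, min_assoc] at hk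
  rw [OSeq.restrict_f _ (by simpa [min_assoc] using hk),
    OSeq.restrict_f ρ (lt_of_lt_of_le hk (by simp [min_assoc])),
    OSeq.restrict_f ρ (by simpa [min_assoc] using hk)]

theorem exists_extension (lam : Cardinal.{0}) (hunc : ℵ₀ < lam)
    (ϱ : OSeq) (hlen : ϱ.len < lam.ord)
    (hran : ∀ i < ϱ.len, ϱ.f i < (Order.succ lam).ord ∧ lam.ord ∣ ϱ.f i)
    (hinc : ∀ i j, i < j → j < ϱ.len → ϱ.f i < ϱ.f j)
    (p : PreCond) (hp : IsCond lam p) :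
    ∃ q, IsCond lam q ∧ CondLe lam p q ∧ ϱ ∈ q.Lam := by
  obtain ⟨hu1, hu2, hu3, hb1, hb2, hb3, hb4, hb5, hc1, hc2, hd1, hd2, he1, he2, he3, he4,
    hg, hh, hi0, hilim, hj, hk, hl⟩ := id hp
  -- ordinal arithmetic facts about `d := lam.ord`
  set d := lam.ord with hd
  have hd0 : 0 < d := by
    rw [hd, Cardinal.lt_ord, Ordinal.card_zero]
    exact aleph0_pos.trans hunc
  have habs : ∀ x < d, x + d = d :=
    Ordinal.principal_add_iff_add_left_eq_self.1 (Ordinal.isPrincipal_add_ord hunc.le)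
  have hadd : ∀ x y, x < d → y < d → x + y < d := fun x y hx hy => by
    rw [hd, Cardinal.lt_ord, Ordinal.card_add]
    exact Cardinal.add_lt_of_lt hunc.le (Cardinal.lt_ord.1 hx) (Cardinal.lt_ord.1 hy)
  -- the new condition
  set U : Set Ordinal := p.u ∪ ϱ.f '' Set.Iio ϱ.len with hU
  set L : Set OSeq := p.Lam ∪ Set.range (fun i => ϱ.restrict i) with hLdef
  set qlt : Ordinal → Ordinal → Prop := fun a b =>
    (a ∈ p.u ∧ b ∈ p.u ∧ p.lto a b) ∨ (¬(a ∈ p.u ∧ b ∈ p.u) ∧ a ∈ U ∧ b ∈ U ∧ a < b)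
    with hqlt
  set QG : OSeq → Set (Ordinal × Ordinal) :=
    fun ρ => {ab | ∃ σ, (σ ∈ p.Lam ∧ σ.IsPrefix ρ) ∧ ab ∈ p.G σ} with hQG
  have hPU : p.u ⊆ U := Set.subset_union_left
  have hϱU : ∀ j < ϱ.len, ϱ.f j ∈ U := fun j hj => Or.inr ⟨j, hj, rfl⟩
  have hdiv : ∀ x, x ∈ U → x ∉ p.u → d ∣ x := by
    rintro x (hx | ⟨j, hj, rfl⟩) hxp
    · exact absurd hx hxp
    · exact (hran j hj).2
  have hGsub : ∀ ρ ∈ p.Lam, QG ρ = p.G ρ := by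
    intro ρ hρ
    apply subset_antisymm
    · rintro ab ⟨σ, ⟨hσ, hpre⟩, hab⟩
      exact G_mono hp hρ hpre hab
    · intro ab hab
      exact ⟨ρ, ⟨hρ, OSeq.isPrefix_refl ρ⟩, hab⟩
  have hQGmono : ∀ ρ ρ', ρ.IsPrefix ρ' → QG ρ ⊆ QG ρ' := by
    rintro ρ ρ' hpre ab ⟨σ, ⟨hσ, hp'⟩, hab⟩
    exact ⟨σ, ⟨hσ, hp'.trans hpre⟩, hab⟩
  have hPair : ∀ ρ ab, ab ∈ QG ρ → ∃ σ, σ ∈ p.Lam ∧ σ.IsPrefix ρ ∧ ab ∈ p.G σ := by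
    rintro ρ ab ⟨σ, ⟨hσ, hpre⟩, hab⟩
    exact ⟨σ, hσ, hpre, hab⟩
  have hPair2 : ∀ ρ ab ab', ab ∈ QG ρ → ab' ∈ QG ρ →
      ∃ σ, σ ∈ p.Lam ∧ σ.IsPrefix ρ ∧ ab ∈ p.G σ ∧ ab' ∈ p.G σ := by
    rintro ρ ab ab' ⟨σ1, ⟨hσ1, hp1⟩, h1⟩ ⟨σ2, ⟨hσ2, hp2⟩, h2⟩
    rcases le_total σ1.len σ2.len with h | h
    · exact ⟨σ2, hσ2, hp2, G_mono hp hσ2 (OSeq.prefix_of_prefix hp1 hp2 h) h1, h2⟩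
    · exact ⟨σ1, hσ1, hp1, h1, G_mono hp hσ1 (OSeq.prefix_of_prefix hp2 hp1 h) h2⟩
  -- chain extraction for QG
  have hChainQ : ∀ ρ (σf : ℕ → OSeq), (∀ n, σf n ∈ p.Lam) → (∀ n, (σf n).IsPrefix ρ) →
      ∃ τ, τ ∈ p.Lam ∧ τ.IsPrefix ρ ∧ (∀ n, p.G (σf n) ⊆ p.G τ) ∧ p.G τ ⊆ QG ρ := by
    intro ρ σf h1 h2
    obtain ⟨τ, hτ, hτpre, hsub⟩ := chainG hp σf h1 h2
    exact ⟨τ, hτ, hτpre, hsub, fun ab hab => ⟨τ, ⟨hτ, hτpre⟩, hab⟩⟩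
  -- the order `qlt`
  have hql_mem : ∀ a b, qlt a b → a ∈ U ∧ b ∈ U := by
    rintro a b (⟨ha, hb, -⟩ | ⟨-, ha, hb, -⟩)
    exacts [⟨hPU ha, hPU hb⟩, ⟨ha, hb⟩]
  have hql_irr : ∀ a, ¬ qlt a a := by
    rintro a (⟨-, -, h⟩ | ⟨-, -, -, h⟩)
    exacts [hb2 a h, lt_irrefl a h]
  have hql_iff : ∀ a ∈ p.u, ∀ b ∈ p.u, (p.lto a b ↔ qlt a b) := by
    intro a ha b hb
    constructor
    · exact fun h => Or.inl ⟨ha, hb, h⟩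
    · rintro (⟨-, -, h⟩ | ⟨hn, -⟩)
      · exact h
      · exact absurd ⟨ha, hb⟩ hn
  have hql_trans : ∀ a b c, qlt a b → qlt b c → qlt a c := by
    rintro a b c (⟨ha, hb, hab⟩ | ⟨hnab, haU, hbU, hab⟩) (⟨hb', hc, hbc⟩ | ⟨hnbc, hbU', hcU, hbc⟩)
    · exact Or.inl ⟨ha, hc, hb3 _ _ _ hab hbc⟩
    · -- p.lto a b, then b < c with c new
      have hc : c ∉ p.u := fun h => hnbc ⟨hb, h⟩
      have hcd : d ∣ c := hdiv c hcU hc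
      refine Or.inr ⟨fun h => hc h.2, hPU ha, hcU, ?_⟩
      by_contra hle
      push_neg at hle
      have : b + d ≤ a := le_trans (dvd_add_le hd0 habs hcd hbc) hle
      exact hb2 a (hb3 _ _ _ hab (hb5 b hb a ha this))
    · -- a < b with a or b new, then p.lto b c
      have ha : a ∉ p.u := fun h => hnab ⟨h, hb'⟩
      have had : d ∣ a := hdiv a haU ha
      have hbc' : b < c + d := by
        by_contra hle
        push_neg at hle
        exact hb2 b (hb3 _ _ _ hbc (hb5 c hc b hb' hle))
      have hac : a ≤ c := dvd_le_of_lt_add hd0 habs had (lt_of_lt_of_le hab hbc'.le)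
      refine Or.inr ⟨fun h => ha h.1, haU, hPU hc, lt_of_le_of_ne hac (fun h => ha (h ▸ hc))⟩
    · by_cases hac : a ∈ p.u ∧ c ∈ p.u
      · have hb : b ∉ p.u := fun h => hnab ⟨hac.1, h⟩
        have hbd := hdiv b hbU hb
        have : a + d ≤ c := (le_of_lt (lt_of_le_of_lt (dvd_add_le hd0 habs hbd hab) hbc))
        exact Or.inl ⟨hac.1, hac.2, hb5 a hac.1 c hac.2 this⟩
      · exact Or.inr ⟨hac, haU, hcU, lt_trans hab hbc⟩
  have hql_total : ∀ a ∈ U, ∀ b ∈ U, a ≠ b → qlt a b ∨ qlt b a := by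
    intro a ha b hb hne
    by_cases hpu : a ∈ p.u ∧ b ∈ p.u
    · rcases hb4 a hpu.1 b hpu.2 hne with h | h
      · exact Or.inl (Or.inl ⟨hpu.1, hpu.2, h⟩)
      · exact Or.inr (Or.inl ⟨hpu.2, hpu.1, h⟩)
    · rcases lt_or_gt_of_ne hne with h | h
      · exact Or.inl (Or.inr ⟨hpu, ha, hb, h⟩)
      · exact Or.inr (Or.inr ⟨fun hc => hpu ⟨hc.2, hc.1⟩, hb, ha, h⟩)
  have hql_lam : ∀ a ∈ U, ∀ b ∈ U, a + d ≤ b → qlt a b := by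
    intro a ha b hb hab
    by_cases hpu : a ∈ p.u ∧ b ∈ p.u
    · exact Or.inl ⟨hpu.1, hpu.2, hb5 a hpu.1 b hpu.2 hab⟩
    · refine Or.inr ⟨hpu, ha, hb, ?_⟩
      calc a = a + 0 := (add_zero a).symm
        _ < a + d := add_lt_add_right hd0 a
        _ ≤ b := hab
  have hQdom : ∀ (ρ : OSeq) (ℓ : Fin 2) (a : Ordinal), a ∈ domSide (QG ρ) ℓ ↔
      ∃ σ, (σ ∈ p.Lam ∧ σ.IsPrefix ρ) ∧ a ∈ domSide (p.G σ) ℓ := by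
    intro ρ ℓ a
    rw [hQG]
    exact mem_domSide_union
  -- clause (a)
  have hA1 : U ⊆ Set.Iio (Order.succ lam).ord := by
    rintro x (hx | ⟨j, hj, rfl⟩)
    · exact hu1 hx
    · exact (hran j hj).1
  have haleph : ℵ₀ ≤ Cardinal.lift.{1} lam := by
    rw [← Cardinal.lift_aleph0.{1, 0}]
    exact Cardinal.lift_le.2 hunc.le
  have hA2 : #U < Cardinal.lift.{1} lam := by
    refine lt_of_le_of_lt (Cardinal.mk_union_le _ _) (Cardinal.add_lt_of_lt haleph hu2 ?_)
    refine lt_of_le_of_lt Cardinal.mk_image_le ?_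
    rw [Ordinal.mk_Iio_ordinal]
    exact Cardinal.lift_lt.2 (Cardinal.lt_ord.1 hlen)
  have hA3 : ∀ α i : Ordinal, i < d → α + i ∈ U → α ∈ U := by
    rintro α i hi (h | ⟨j, hj, hji⟩)
    · exact hPU (hu3 α i hi h)
    · have hdd : d ∣ α + i := by rw [← hji]; exact (hran j hj).2
      have hiz : i = 0 := eq_zero_of_dvd_add hd0 hadd hi hdd
      refine Or.inr ⟨j, hj, ?_⟩
      rw [hji, hiz, add_zero]
  -- clause (c)
  have hC1 : ∀ ℓ, ∀ η ∈ p.S ℓ, (∀ n, η n ∈ U) ∧ ∀ n : ℕ, η n + d ≤ η (n + 1) :=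
    fun ℓ η hη => ⟨fun n => hPU ((hc1 ℓ η hη).1 n), (hc1 ℓ η hη).2⟩
  -- clause (d)
  have hD1 : #L < Cardinal.lift.{1} lam := by
    refine lt_of_le_of_lt (Cardinal.mk_union_le _ _) (Cardinal.add_lt_of_lt haleph hd1 ?_)
    have hrange_eq : Set.range (fun i => ϱ.restrict i) =
        (fun i => ϱ.restrict i) '' Set.Iic ϱ.len := by
      apply subset_antisymm
      · rintro _ ⟨i, rfl⟩
        exact ⟨min i ϱ.len, Set.mem_Iic.2 (min_le_right _ _), OSeq.restrict_min_len ϱ i⟩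
      · exact Set.image_subset_range _ _
    rw [hrange_eq]
    refine lt_of_le_of_lt Cardinal.mk_image_le ?_
    refine lt_of_le_of_lt (Cardinal.mk_le_mk_of_subset (t := Set.Iio (ϱ.len + 1)) ?_) ?_
    · intro x hx
      rw [Set.mem_Iio, Ordinal.add_one_eq_succ]
      exact Order.lt_succ_iff.2 hx
    · rw [Ordinal.mk_Iio_ordinal]
      refine Cardinal.lift_lt.2 (Cardinal.lt_ord.1 ?_)
      rw [Ordinal.add_one_eq_succ]
      exact (Cardinal.isSuccLimit_ord hunc.le).succ_lt hlen
  have hD2 : ∀ ρ ∈ L, ρ.len < d ∧ (∀ i < ρ.len, ρ.f i ∈ U ∧ d ∣ ρ.f i) ∧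
      ∀ i j, i < j → j < ρ.len → ρ.f i < ρ.f j := by
    rintro ρ (hρ | ⟨i, rfl⟩)
    · obtain ⟨h1, h2, h3⟩ := hd2 ρ hρ
      exact ⟨h1, fun i hi => ⟨hPU (h2 i hi).1, (h2 i hi).2⟩, h3⟩
    · refine ⟨lt_of_le_of_lt (min_le_right _ _) hlen, fun j hj => ?_, fun j k hjk hk => ?_⟩
      · rw [OSeq.restrict_len] at hj
        rw [OSeq.restrict_f ϱ hj]
        have hj' : j < ϱ.len := lt_of_lt_of_le hj (min_le_right _ _)
        exact ⟨hϱU j hj', (hran j hj').2⟩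
      · rw [OSeq.restrict_len] at hk
        rw [OSeq.restrict_f ϱ hk, OSeq.restrict_f ϱ (lt_trans hjk hk)]
        exact hinc j k hjk (lt_of_lt_of_le hk (min_le_right _ _))
  -- clauses (e), (f)
  have hE1 : ∀ ρ ∈ L, ∀ a b : Ordinal, (a, b) ∈ QG ρ → a ∈ U ∧ b ∈ U ∧ a + d = b + d := by
    intro ρ hρ a b hab
    obtain ⟨σ, hσ, -, h⟩ := hPair ρ _ hab
    obtain ⟨h1, h2, h3⟩ := he1 σ hσ a b h
    exact ⟨hPU h1, hPU h2, h3⟩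
  have hE2 : ∀ ρ ∈ L, ∀ a b b' : Ordinal, (a, b) ∈ QG ρ → (a, b') ∈ QG ρ → b = b' := by
    intro ρ hρ a b b' h h'
    obtain ⟨σ, hσ, -, h1, h2⟩ := hPair2 ρ _ _ h h'
    exact he2 σ hσ a b b' h1 h2
  have hE3 : ∀ ρ ∈ L, ∀ a a' b : Ordinal, (a, b) ∈ QG ρ → (a', b) ∈ QG ρ → a = a' := by
    intro ρ hρ a a' b h h'
    obtain ⟨σ, hσ, -, h1, h2⟩ := hPair2 ρ _ _ h h'
    exact he3 σ hσ a a' b h1 h2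
  have hE4 : ∀ ρ ∈ L, ∀ a b a' b' : Ordinal, (a, b) ∈ QG ρ → (a', b') ∈ QG ρ →
      (qlt a a' ↔ qlt b b') := by
    intro ρ hρ a b a' b' h h'
    obtain ⟨σ, hσ, -, h1, h2⟩ := hPair2 ρ _ _ h h'
    obtain ⟨ha, hb, -⟩ := he1 σ hσ a b h1
    obtain ⟨ha', hb', -⟩ := he1 σ hσ a' b' h2
    rw [← hql_iff a ha a' ha', ← hql_iff b hb b' hb']
    exact he4 σ hσ a b a' b' h1 h2
  -- clause (g)
  have hG : ∀ ℓ, ∀ ρ ∈ L, ∀ η ∈ p.S ℓ,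
      Set.range η ⊆ domSide (QG ρ) ℓ ∨ (Set.range η ∩ domSide (QG ρ) ℓ).Finite := by
    intro ℓ ρ hρ η hη
    by_cases hfin : (Set.range η ∩ domSide (QG ρ) ℓ).Finite
    · exact Or.inr hfin
    left
    have hinf : (Set.range η ∩ domSide (QG ρ) ℓ).Infinite := hfin
    let e := Set.Infinite.natEmbedding _ hinf
    have hch : ∀ n : ℕ, ∃ σ, (σ ∈ p.Lam ∧ σ.IsPrefix ρ) ∧
        ((e n : Ordinal)) ∈ domSide (p.G σ) ℓ :=
      fun n => (hQdom ρ ℓ _).1 (e n).2.2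
    choose σf hσf using hch
    obtain ⟨τ, hτ, hτpre, hsub, hτQ⟩ := hChainQ ρ σf (fun n => (hσf n).1.1)
      (fun n => (hσf n).1.2)
    have hinj : Function.Injective (fun n : ℕ => (e n : Ordinal)) := fun m n hmn =>
      e.injective (Subtype.ext hmn)
    have hinf2 : (Set.range η ∩ domSide (p.G τ) ℓ).Infinite :=
      Set.infinite_of_injective_forall_mem hinj
        (fun n => ⟨(e n).2.1, domSide_mono (hsub n) (hσf n).2⟩)
    rcases hg ℓ τ hτ η hη with hcase | hcase
    · exact fun x hx => domSide_mono hτQ (hcase hx)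
    · exact absurd hcase hinf2
  -- clause (h)
  have hH : ∀ ρ ∈ L, ∀ i ≤ ρ.len, ρ.restrict i ∈ L ∧ QG (ρ.restrict i) ⊆ QG ρ := by
    rintro ρ hρ i hi
    refine ⟨?_, hQGmono _ _ (OSeq.restrict_isPrefix ρ i)⟩
    rcases hρ with hρ | ⟨j, rfl⟩
    · exact Or.inl (hh ρ hρ i hi).1
    · exact Or.inr ⟨min i j, (OSeq.restrict_restrict ϱ j i).symm⟩
  -- clause (i)
  have hI0 : ∀ ρ ∈ L, ρ.len = 0 → QG ρ = ∅ := by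
    intro ρ hρ h0
    apply Set.eq_empty_iff_forall_notMem.2
    rintro ab ⟨σ, ⟨hσ, hpre⟩, hab⟩
    have h00 : σ.len = 0 := le_antisymm (h0 ▸ hpre.1) zero_le
    rw [hi0 σ hσ h00] at hab
    exact hab
  have hIlim : ∀ ρ ∈ L, Order.IsSuccLimit ρ.len → QG ρ = ⋃ i ∈ Set.Iio ρ.len, QG (ρ.restrict i) := by
    intro ρ hρ hlim
    apply subset_antisymm
    · rintro ab ⟨σ, ⟨hσ, hpre⟩, hab⟩
      rcases lt_or_eq_of_le hpre.1 with hlt | heq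
      · refine Set.mem_biUnion (Set.mem_Iio.2 hlt) ?_
        refine ⟨σ, ⟨hσ, ?_⟩, hab⟩
        refine ⟨le_of_eq (min_eq_left hpre.1).symm, fun k hk => ?_⟩
        rw [OSeq.restrict_f ρ (lt_min hk (hk.trans_le hpre.1))]
        exact hpre.2 k hk
      · obtain rfl := OSeq.eq_of_prefix_len_le hpre heq.ge
        rw [hilim σ hσ hlim] at hab
        simp only [Set.mem_iUnion, Set.mem_Iio, exists_prop] at hab ⊢
        obtain ⟨k, hk, hab'⟩ := hab
        exact ⟨k, hk, σ.restrict k, ⟨(hh σ hσ k hk.le).1, OSeq.isPrefix_refl _⟩, hab'⟩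
    · intro ab hab
      simp only [Set.mem_iUnion, Set.mem_Iio, exists_prop] at hab
      obtain ⟨k, hk, hab'⟩ := hab
      exact hQGmono _ _ (OSeq.restrict_isPrefix ρ k) hab'
  -- clause (j)
  have hJ : ∀ ρ ∈ L, ∀ i : Ordinal, ρ.len = i + 1 → ∀ a b : Ordinal, (a, b) ∈ QG ρ →
      a < ρ.f i ∧ b < ρ.f i := by
    intro ρ hρ i hlen1 a b hab
    obtain ⟨σ, hσ, hpre, h⟩ := hPair ρ _ hab
    obtain ⟨k, hkσ, ha, hb⟩ := boundG hp σ hσ a b h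
    have hkρ : k < ρ.len := lt_of_lt_of_le hkσ hpre.1
    have hfk : σ.f k = ρ.f k := hpre.2 k hkσ
    have hki : k ≤ i := by
      rw [hlen1, Ordinal.add_one_eq_succ, Order.lt_succ_iff] at hkρ
      exact hkρ
    have hiρ : i < ρ.len := by
      rw [hlen1, Ordinal.add_one_eq_succ]
      exact Order.lt_succ i
    rcases lt_or_eq_of_le hki with hki' | rfl
    · have hmono := (hD2 ρ hρ).2.2 k i hki' hiρ
      exact ⟨lt_trans (hfk ▸ ha) hmono, lt_trans (hfk ▸ hb) hmono⟩
    · exact ⟨hfk ▸ ha, hfk ▸ hb⟩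
  -- clause (k)
  have hK : ∀ ρ ∈ L, ∀ η ν : ℕ → Ordinal, (∀ n, (η n, ν n) ∈ QG ρ) →
      (η ∈ p.S 0 ↔ ν ∈ p.S 1) := by
    intro ρ hρ η ν hpair
    choose σf h1 h2 h3 using fun n => hPair ρ _ (hpair n)
    obtain ⟨τ, hτ, -, hsub, -⟩ := hChainQ ρ σf h1 h2
    exact hk τ hτ η ν (fun n => hsub n (h3 n))
  -- clause (l)
  have hLc : ∀ ρs : ℕ → OSeq, (∀ n, ρs n ∈ L) →
      (∀ n, (ρs n).IsPrefix (ρs (n + 1)) ∧ (ρs n).len < (ρs (n + 1)).len) →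
      ∃ σ ∈ L, (∀ n, (ρs n).IsPrefix σ) ∧ ∀ i < σ.len, ∃ n, i < (ρs n).len := by
    intro ρs hρs hch
    by_cases hall : ∀ n, ρs n ∈ p.Lam
    · obtain ⟨σ, hσ, h1, h2⟩ := hl ρs hall hch
      exact ⟨σ, Or.inl hσ, h1, h2⟩
    · push_neg at hall
      obtain ⟨N, hN⟩ := hall
      have hchain : ∀ m n, m ≤ n → (ρs m).IsPrefix (ρs n) := by
        intro m n hmn
        induction hmn with
        | refl => exact OSeq.isPrefix_refl _
        | step h IH => exact IH.trans (hch _).1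
      have hnot : ∀ m, N ≤ m → ρs m ∉ p.Lam := fun m hm hmem =>
        hN (prefix_mem_Lam hp hmem (hchain N m hm))
      have hpre : ∀ n, (ρs n).IsPrefix ϱ := by
        intro n
        have h1 : (ρs (max n N)).IsPrefix ϱ := by
          rcases hρs (max n N) with h | ⟨i, hi⟩
          · exact absurd h (hnot _ (le_max_right _ _))
          · rw [← hi]; exact OSeq.restrict_isPrefix ϱ i
        exact (hchain n _ (le_max_left _ _)).trans h1
      have hsle : ∀ n, (ρs n).len ≤ ⨆ m, (ρs m).len := fun n =>
        Ordinal.le_iSup (fun m => (ρs m).len) n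
      refine ⟨ϱ.restrict (⨆ m, (ρs m).len), Or.inr ⟨_, rfl⟩, fun n => ⟨?_, ?_⟩,
        fun i hi => ?_⟩
      · rw [OSeq.restrict_len]
        exact le_min (hsle n) (hpre n).1
      · intro i hi
        rw [OSeq.restrict_f ϱ
          (lt_min (lt_of_lt_of_le hi (hsle n)) (lt_of_lt_of_le hi (hpre n).1))]
        exact (hpre n).2 i hi
      · rw [OSeq.restrict_len, lt_min_iff] at hi
        exact Ordinal.lt_iSup_iff.1 hi.1
  -- assemble
  refine ⟨⟨U, qlt, p.S, L, QG⟩, ?_, ?_, Or.inr ⟨ϱ.len, OSeq.restrict_self ϱ⟩⟩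
  · exact ⟨hA1, hA2, hA3, hql_mem, hql_irr, hql_trans, hql_total, hql_lam, hC1, hc2, hD1, hD2,
      hE1, hE2, hE3, hE4, hG, hH, hI0, hIlim, hJ, hK, hLc⟩
  · refine ⟨hPU, hql_iff, fun ℓ => subset_rfl, fun ρ hρ => Or.inl hρ,
      fun ρ hρ ab hab => ⟨ρ, ⟨hρ, OSeq.isPrefix_refl ρ⟩, hab⟩,
      fun ℓ η h1 h2 => absurd h1 h2,
      fun ρ hρ hne => absurd (hGsub ρ hρ).symm hne,
      ?_, ?_⟩
    · intro ρ hρ ℓ α hα hdom β hap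
      have hap' : applies (QG ρ) ℓ α β := hap
      rw [hGsub ρ hρ] at hap'
      exact absurd (applies_mem_domSide hap') hdom
    · intro n hn ρs ℓv αs hρs hαs hap hnc
      have h0 : applies (QG (ρs 0)) (ℓv 0) (αs 0) (αs 1) := hap 0 hn
      rw [hGsub (ρs 0) (hρs 0 hn)] at h0
      refine ⟨fun _ => applies_mem_domSide h0, fun hα0 hα1 => ?_⟩
      exfalso
      apply hα1
      by_cases hℓ : ℓv 0 = 0
      · simp only [applies, if_pos hℓ] at h0
        exact (he1 (ρs 0) (hρs 0 hn) _ _ h0).2.1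
      · simp only [applies, if_neg hℓ] at h0
        exact (he1 (ρs 0) (hρs 0 hn) _ _ h0).1



/-- `⊛₇` in the proof of Claim 3c.4.  Let `λ = λ^{<λ}` be uncountable.
For every increasing sequence `ϱ` of ordinals `< λ⁺` divisible by `λ`, of length `< λ`,
the set `{p ∈ ℚ : ϱ ∈ Λ^p}` is dense and upward closed. -/
theorem dense_mem_Lam
    (lam : Cardinal.{0}) (hunc : ℵ₀ < lam) (hpow : lam ^< lam = lam)
    (ϱ : OSeq) (hlen : ϱ.len < lam.ord)
    (hran : ∀ i < ϱ.len, ϱ.f i < (Order.succ lam).ord ∧ lam.ord ∣ ϱ.f i)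
    (hinc : ∀ i j, i < j → j < ϱ.len → ϱ.f i < ϱ.f j) :
    (∀ p, IsCond lam p → ∃ q, IsCond lam q ∧ CondLe lam p q ∧ ϱ ∈ q.Lam) ∧
    (∀ p q, IsCond lam p → IsCond lam q → CondLe lam p q → ϱ ∈ p.Lam → ϱ ∈ q.Lam) := by
  constructor
  · exact fun p hp => exists_extension lam hunc ϱ hlen hran hinc p hp
  · intro p q hp hq hle hϱ
    exact hle.2.2.2.1 hϱ

end ShelahQ
end

section
/- Let λ be a regular uncountable cardinal and let I be a linear order of cardinality λ such that I is isomorphic to its reverse I*, I has a cofinal subset of order type λ, and (I·α) + (I·β)* ≅ I for all ordinals 1 ≤ α, β < λ⁺. If S₁, S₂ ⊆ S^{λ⁺}_λ and S₁ ∖ S₂ is stationary in λ⁺, then the linear orders I_{S₁} and I_{S₂} are not isomorphic. -/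
open Cardinal

namespace ISOrders

/-- The ordinal `< λ⁺` coded by an element of the canonical type of order type `λ⁺`. -/
noncomputable def rank (lam : Cardinal.{0}) (a : (Order.succ lam).ord.ToType) : Ordinal :=
  ((Ordinal.ToType.mk (o := (Order.succ lam).ord)).symm a : Set.Iio (Order.succ lam).ord)

/-- The `α`-th block of the linear order `I_S`:  a copy of `(I·ω)*` if `α ∈ S` (coded by
the proposition `inS`), and a copy of `I` otherwise, both realized inside `(I·ω)* + I`. -/
def Fiber (I : Type) [LinearOrder I] (inS : Prop) : Type :=
  {z : ((ℕ ×ₗ I)ᵒᵈ) ⊕ₗ I // (inS ∧ (ofLex z).isLeft) ∨ (¬ inS ∧ (ofLex z).isRight)}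

noncomputable instance (I : Type) [LinearOrder I] (c : Prop) : LinearOrder (Fiber I c) := by
  unfold Fiber; infer_instance

/-- The linear order `I_S = Σ_{α<λ⁺} I_{S,α}` where `I_{S,α} = I` for `α ∉ S` and
`I_{S,α} = (I·ω)*` for `α ∈ S`. -/
noncomputable def ISOrd (lam : Cardinal.{0}) (I : Type) [LinearOrder I] (S : Set Ordinal) :
    Type :=
  Σₗ a : (Order.succ lam).ord.ToType, Fiber I (rank lam a ∈ S)

noncomputable instance (lam : Cardinal.{0}) (I : Type) [LinearOrder I] (S : Set Ordinal) :
    LinearOrder (ISOrd lam I S) := by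
  unfold ISOrd; infer_instance

/-- `I·α`: the concatenation of `α` copies of the linear order `I`. -/
abbrev ordCopies (I : Type) (α : Ordinal.{0}) : Type := α.ToType ×ₗ I

/-- `C` is a club (closed unbounded set) in `λ⁺`. -/
def IsClubIn (C : Set Ordinal) (θ : Ordinal.{0}) : Prop :=
  C ⊆ Set.Iio θ ∧ (∀ α < θ, ∃ β ∈ C, α ≤ β) ∧
    (∀ δ < θ, Order.IsSuccLimit δ → (∀ α < δ, ∃ β ∈ C, α ≤ β ∧ β < δ) → δ ∈ C)

/-- `S` is stationary in `λ⁺`: it meets every club of `λ⁺`. -/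
def IsStationaryIn (S : Set Ordinal) (θ : Ordinal.{0}) : Prop :=
  ∀ C : Set Ordinal, IsClubIn C θ → (S ∩ C).Nonempty

/-! ### Auxiliary lemmas about `rank` -/

lemma rank_lt (lam : Cardinal.{0}) (a : (Order.succ lam).ord.ToType) :
    rank lam a < (Order.succ lam).ord :=
  ((Ordinal.ToType.mk (o := (Order.succ lam).ord)).symm a).2

lemma rank_lt_rank_iff (lam : Cardinal.{0}) {a b : (Order.succ lam).ord.ToType} :
    rank lam a < rank lam b ↔ a < b := by
  rw [show (rank lam a < rank lam b) ↔
      ((Ordinal.ToType.mk (o := (Order.succ lam).ord)).symm a <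
       (Ordinal.ToType.mk (o := (Order.succ lam).ord)).symm b) from Subtype.coe_lt_coe,
    OrderIso.lt_iff_lt]

lemma rank_le_rank_iff (lam : Cardinal.{0}) {a b : (Order.succ lam).ord.ToType} :
    rank lam a ≤ rank lam b ↔ a ≤ b := by
  rw [show (rank lam a ≤ rank lam b) ↔
      ((Ordinal.ToType.mk (o := (Order.succ lam).ord)).symm a ≤
       (Ordinal.ToType.mk (o := (Order.succ lam).ord)).symm b) from Subtype.coe_le_coe,
    OrderIso.le_iff_le]

lemma rank_inj (lam : Cardinal.{0}) {a b : (Order.succ lam).ord.ToType}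
    (h : rank lam a = rank lam b) : a = b :=
  (Ordinal.ToType.mk (o := (Order.succ lam).ord)).symm.injective (Subtype.ext h)

lemma exists_rank_eq (lam : Cardinal.{0}) {o : Ordinal} (h : o < (Order.succ lam).ord) :
    ∃ a, rank lam a = o :=
  ⟨Ordinal.ToType.mk (o := (Order.succ lam).ord) ⟨o, h⟩, by simp [rank]⟩

/-! ### Auxiliary lemmas about `Fiber` -/

section FiberLemmas

variable {I : Type} [LinearOrder I] {c : Prop}

/-- An element of the `(I·ω)*`-part of a fiber. -/
def Fiber.left (hc : c) (p : ℕ × I) : Fiber I c :=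
  ⟨toLex (Sum.inl (OrderDual.toDual (toLex p))), Or.inl ⟨hc, rfl⟩⟩

/-- An element of the `I`-part of a fiber. -/
def Fiber.right (hc : ¬c) (i : I) : Fiber I c :=
  ⟨toLex (Sum.inr i), Or.inr ⟨hc, rfl⟩⟩

lemma Fiber.lt_iff {z w : Fiber I c} : z < w ↔ z.val < w.val := Iff.rfl

lemma Fiber.le_iff {z w : Fiber I c} : z ≤ w ↔ z.val ≤ w.val := Iff.rfl

lemma Fiber.left_lt_left_iff (hc : c) {p q : ℕ × I} :
    Fiber.left hc p < Fiber.left hc q ↔ toLex q < toLex p := by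
  rw [Fiber.lt_iff]
  show toLex (Sum.inl _) < toLex (Sum.inl _) ↔ _
  rw [Sum.Lex.inl_lt_inl_iff, OrderDual.toDual_lt_toDual]

lemma Fiber.left_le_left_iff (hc : c) {p q : ℕ × I} :
    Fiber.left hc p ≤ Fiber.left hc q ↔ toLex q ≤ toLex p := by
  rw [Fiber.le_iff]
  show toLex (Sum.inl _) ≤ toLex (Sum.inl _) ↔ _
  rw [Sum.Lex.inl_le_inl_iff, OrderDual.toDual_le_toDual]

lemma Fiber.right_lt_right_iff (hc : ¬c) {i j : I} :
    Fiber.right hc i < Fiber.right hc j ↔ i < j := by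
  rw [Fiber.lt_iff]; exact Sum.Lex.inr_lt_inr_iff

lemma Fiber.right_le_right_iff (hc : ¬c) {i j : I} :
    Fiber.right hc i ≤ Fiber.right hc j ↔ i ≤ j := by
  rw [Fiber.le_iff]; exact Sum.Lex.inr_le_inr_iff

lemma Fiber.eq_left (hc : c) (z : Fiber I c) : ∃ p : ℕ × I, z = Fiber.left hc p := by
  obtain ⟨z, hz | hz⟩ := z
  · obtain ⟨w, hw⟩ := Sum.isLeft_iff.mp hz.2
    exact ⟨ofLex (OrderDual.ofDual w), Subtype.ext (congrArg toLex hw)⟩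
  · exact absurd hc hz.1

lemma Fiber.eq_right (hc : ¬c) (z : Fiber I c) : ∃ i : I, z = Fiber.right hc i := by
  obtain ⟨z, hz | hz⟩ := z
  · exact absurd hz.1 hc
  · obtain ⟨w, hw⟩ := Sum.isRight_iff.mp hz.2
    exact ⟨w, Subtype.ext (congrArg toLex hw)⟩

lemma Fiber.card_le {lam : Cardinal.{0}} (hcard : #I = lam) (hunc : ℵ₀ ≤ lam) :
    #(Fiber I c) ≤ lam := by
  have h1 : #(Fiber I c) ≤ #(((ℕ ×ₗ I)ᵒᵈ) ⊕ₗ I) := mk_subtype_le _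
  have h2 : #(((ℕ ×ₗ I)ᵒᵈ) ⊕ₗ I) = #(ℕ × I ⊕ I) := rfl
  rw [h2] at h1
  simp only [mk_sum, mk_prod, mk_nat, lift_id, hcard, lift_uzero] at h1
  calc #(Fiber I c) ≤ ℵ₀ * lam + lam := h1
    _ = lam + lam := by rw [Cardinal.mul_eq_max le_rfl hunc, max_eq_right hunc]
    _ = lam := Cardinal.add_eq_self hunc

end FiberLemmas

/-! ### Auxiliary lemmas about `ISOrd` -/

section ISOrdLemmas

variable {lam : Cardinal.{0}} {I : Type} [LinearOrder I] {S : Set Ordinal}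

/-- First projection of an element of `ISOrd`. -/
def ISOrd.fst (x : ISOrd lam I S) : (Order.succ lam).ord.ToType := (ofLex x).1

/-- Second projection of an element of `ISOrd`. -/
def ISOrd.snd (x : ISOrd lam I S) : Fiber I (rank lam x.fst ∈ S) := (ofLex x).2

/-- Build an element of `ISOrd`. -/
def ISOrd.mk (a : (Order.succ lam).ord.ToType) (z : Fiber I (rank lam a ∈ S)) :
    ISOrd lam I S := toLex ⟨a, z⟩

lemma ISOrd.mk_fst (a : (Order.succ lam).ord.ToType) (z : Fiber I (rank lam a ∈ S)) :
    (ISOrd.mk a z).fst = a := rfl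

lemma ISOrd.eq_mk (x : ISOrd lam I S) : x = ISOrd.mk x.fst x.snd := rfl

lemma ISOrd.lt_iff {x y : ISOrd lam I S} :
    x < y ↔ x.fst < y.fst ∨ ∃ h : x.fst = y.fst,
      (h ▸ (ofLex x).2 : Fiber I (rank lam y.fst ∈ S)) < (ofLex y).2 := by
  show Sigma.Lex _ _ _ _ ↔ _
  refine (Sigma.lex_iff (a := ofLex x) (b := ofLex y)).trans ?_
  constructor
  · rintro (h | ⟨h, h2⟩)
    · exact Or.inl h
    · refine Or.inr ⟨h, ?_⟩; cases x; cases y; cases h; exact h2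
  · rintro (h | ⟨h, h2⟩)
    · exact Or.inl h
    · refine Or.inr ⟨h, ?_⟩; cases x; cases y; cases h; exact h2

lemma ISOrd.lt_of_fst_lt {x y : ISOrd lam I S} (h : x.fst < y.fst) : x < y :=
  ISOrd.lt_iff.mpr (Or.inl h)

lemma ISOrd.fst_le_of_le {x y : ISOrd lam I S} (h : x ≤ y) : x.fst ≤ y.fst := by
  rcases eq_or_lt_of_le h with h | h
  · exact le_of_eq (congrArg ISOrd.fst h)
  · rcases ISOrd.lt_iff.mp h with h | ⟨h, _⟩
    · exact le_of_lt h
    · exact le_of_eq h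

lemma ISOrd.mk_lt_mk_iff {a : (Order.succ lam).ord.ToType}
    {z w : Fiber I (rank lam a ∈ S)} : ISOrd.mk a z < ISOrd.mk a w ↔ z < w := by
  rw [ISOrd.lt_iff]
  constructor
  · rintro (h | ⟨h, h2⟩)
    · exact absurd h (lt_irrefl _)
    · exact h2
  · intro h; exact Or.inr ⟨rfl, h⟩

lemma ISOrd.mk_le_mk_iff {a : (Order.succ lam).ord.ToType}
    {z w : Fiber I (rank lam a ∈ S)} : ISOrd.mk a z ≤ ISOrd.mk a w ↔ z ≤ w := by
  constructor
  · intro h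
    by_contra hc
    exact absurd (ISOrd.mk_lt_mk_iff.mpr (lt_of_not_ge hc)) (not_lt_of_ge h)
  · intro h
    rcases eq_or_lt_of_le h with h | h
    · exact le_of_eq (by rw [h])
    · exact le_of_lt (ISOrd.mk_lt_mk_iff.mpr h)

/-- Coinitiality of a block of the form `(I·ω)*` inside `ISOrd`. -/
lemma ISOrd.exists_left_le {a : (Order.succ lam).ord.ToType} (haS : rank lam a ∈ S) (i₀ : I)
    (z : ISOrd lam I S) (hz : z.fst = a) :
    ∃ n, ISOrd.mk a (Fiber.left haS (n, i₀)) ≤ z := by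
  obtain ⟨b, w⟩ := z
  have hz' : b = a := hz
  subst hz'
  obtain ⟨p, hp⟩ := Fiber.eq_left haS w
  refine ⟨(ofLex p).1 + 1, ?_⟩
  have : ISOrd.mk b w = ISOrd.mk b (Fiber.left haS p) := by rw [hp]
  show ISOrd.mk b (Fiber.left haS ((ofLex p).1 + 1, i₀)) ≤ ISOrd.mk b w
  rw [this, ISOrd.mk_le_mk_iff, Fiber.left_le_left_iff]
  rw [show p = toLex (ofLex p) from rfl, Prod.Lex.le_iff]
  exact Or.inl (Nat.lt_succ_self _)

/-- Elements of a block of the form `I` inside `ISOrd`. -/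
lemma ISOrd.eq_right_of_fst {a : (Order.succ lam).ord.ToType} (haS : rank lam a ∉ S)
    (z : ISOrd lam I S) (hz : z.fst = a) :
    ∃ i : I, z = ISOrd.mk a (Fiber.right haS i) := by
  obtain ⟨b, w⟩ := z
  have hz' : b = a := hz
  subst hz'
  obtain ⟨i, hi⟩ := Fiber.eq_right haS w
  exact ⟨i, by rw [show (⟨b, w⟩ : ISOrd lam I S) = ISOrd.mk b w from rfl, hi]⟩

/-- The set of elements of `ISOrd` whose block index is at most `α` has cardinality `≤ λ`. -/
lemma ISOrd.card_initial_le (hcard : #I = lam) (hunc : ℵ₀ ≤ lam) {α : Ordinal}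
    (hα : α < (Order.succ lam).ord) :
    #{x : ISOrd lam I S // rank lam x.fst ≤ α} ≤ lam := by
  have hθlim : Order.IsSuccLimit ((Order.succ lam).ord) :=
    Cardinal.isSuccLimit_ord ((le_of_lt (lt_of_le_of_lt hunc (Order.lt_succ lam))))
  -- inject into a sigma type
  have hinj : #{x : ISOrd lam I S // rank lam x.fst ≤ α} ≤
      #(Σ a : {a : (Order.succ lam).ord.ToType // rank lam a ≤ α},
        Fiber I (rank lam a.1 ∈ S)) := by
    refine Cardinal.mk_le_of_injective (f := fun x => ⟨⟨x.1.fst, x.2⟩, (ofLex x.1).2⟩) ?_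
    rintro ⟨x, hx⟩ ⟨y, hy⟩ hxy
    obtain ⟨h1, h2⟩ := Sigma.ext_iff.mp hxy
    exact Subtype.ext (Sigma.ext (congrArg Subtype.val h1) h2)
  have hcount : #{a : (Order.succ lam).ord.ToType // rank lam a ≤ α} ≤ lam := by
    have hα1 : Order.succ α < (Order.succ lam).ord := hθlim.succ_lt hα
    have : #{a : (Order.succ lam).ord.ToType // rank lam a ≤ α} ≤
        #((Order.succ α).ToType) := by
      refine Cardinal.mk_le_of_injective
        (f := fun a => Ordinal.ToType.mk (o := Order.succ α)
          ⟨rank lam a.1, lt_of_le_of_lt a.2 (Order.lt_succ α)⟩) ?_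
      rintro ⟨a, ha⟩ ⟨b, hb⟩ hab
      have := (Ordinal.ToType.mk (o := Order.succ α)).injective hab
      simp only [Subtype.mk.injEq] at this ⊢
      have h' : rank lam a = rank lam b := Subtype.mk.inj this
      rw [rank_inj lam h']
    rw [Cardinal.mk_toType] at this
    refine this.trans ?_
    have := Cardinal.lt_ord.mp hα1
    exact Order.lt_succ_iff.mp this
  refine hinj.trans ?_
  rw [Cardinal.mk_sigma]
  calc Cardinal.sum (fun a : {a : (Order.succ lam).ord.ToType // rank lam a ≤ α} =>
        #(Fiber I (rank lam a.1 ∈ S)))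
      ≤ Cardinal.sum (fun _ : {a : (Order.succ lam).ord.ToType // rank lam a ≤ α} => lam) :=
        Cardinal.sum_le_sum _ _ (fun _ => Fiber.card_le hcard hunc)
    _ = #{a : (Order.succ lam).ord.ToType // rank lam a ≤ α} * lam :=
        Cardinal.sum_const' _ _
    _ ≤ lam * lam := mul_le_mul_left hcount lam
    _ = lam := Cardinal.mul_eq_self hunc

end ISOrdLemmas

/-- In a linear order with a strictly antitone coinitial `λ`-sequence (`λ` regular
uncountable), there is no strictly decreasing coinitial `ω`-sequence. -/
lemma no_countable_coinitial {lam : Cardinal.{0}} (hreg : lam.IsRegular) (hunc : ℵ₀ < lam)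
    {I : Type} [LinearOrder I] (g' : lam.ord.ToType → I)
    (hanti : ∀ i j, i < j → g' j < g' i) (hcoi : ∀ x : I, ∃ i, g' i ≤ x)
    (w : ℕ → I) (hdec : ∀ n, w (n + 1) < w n) (hco : ∀ x : I, ∃ n, w n ≤ x) : False := by
  have hanti' : ∀ i j, i ≤ j → g' j ≤ g' i := by
    intro i j hij
    rcases eq_or_lt_of_le hij with h | h
    · exact le_of_eq (by rw [h])
    · exact le_of_lt (hanti _ _ h)
  by_cases hT : ∃ n, ∀ i, w n ≤ g' i
  · obtain ⟨n, hn⟩ := hT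
    have : w n ≤ w (n + 1) := by
      obtain ⟨i, hi⟩ := hcoi (w (n + 1))
      exact (hn i).trans hi
    exact absurd this (not_le_of_gt (hdec n))
  · push_neg at hT
    choose i' hi' using hT
    -- the countable family i' is bounded in lam.ord.ToType
    have hcof : lam.ord.cof = lam := hreg.cof_eq
    have hsup : (⨆ n, ((Ordinal.ToType.mk (o := lam.ord)).symm (i' n) : Ordinal)) < lam.ord := by
      refine Ordinal.iSup_lt_ord ?_ (fun n => ((Ordinal.ToType.mk (o := lam.ord)).symm (i' n)).2)
      rw [hcof, Cardinal.mk_nat]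
      exact hunc
    set b := Ordinal.ToType.mk (o := lam.ord) ⟨_, hsup⟩ with hb
    have hble : ∀ n, i' n ≤ b := by
      intro n
      have h1 : ((Ordinal.ToType.mk (o := lam.ord)).symm (i' n) : Ordinal) ≤
          (⨆ n, ((Ordinal.ToType.mk (o := lam.ord)).symm (i' n) : Ordinal)) :=
        Ordinal.le_iSup (fun n => ((Ordinal.ToType.mk (o := lam.ord)).symm (i' n) : Ordinal)) n
      have h2 : (Ordinal.ToType.mk (o := lam.ord)).symm (i' n) ≤ ⟨_, hsup⟩ := h1
      calc i' n = Ordinal.ToType.mk (o := lam.ord) ((Ordinal.ToType.mk (o := lam.ord)).symm (i' n)) :=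
            ((Ordinal.ToType.mk (o := lam.ord)).apply_symm_apply _).symm
        _ ≤ b := (Ordinal.ToType.mk (o := lam.ord)).monotone h2
    obtain ⟨m, hm⟩ := hco (g' b)
    exact absurd (hm.trans (hanti' _ _ (hble m))) (not_le_of_gt (hi' m))

/-- Let `λ` be regular uncountable and let `I` be a linear order of
cardinality `λ` isomorphic to its reverse, with a cofinal subset of order type `λ`, and with
`(I·α) + (I·β)* ≅ I` for all `1 ≤ α, β < λ⁺`.  If `S₁, S₂ ⊆ S^{λ⁺}_λ` and `S₁ ∖ S₂` is
stationary in `λ⁺`, then the linear orders `I_{S₁}` and `I_{S₂}` are not isomorphic. -/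
theorem ISOrd_not_isomorphic (lam : Cardinal.{0}) (hreg : lam.IsRegular) (hunc : ℵ₀ < lam)
    (I : Type) (_ : LinearOrder I) (hcard : #I = lam)
    (hrev : Nonempty (I ≃o Iᵒᵈ))
    (hcof : ∃ g : lam.ord.ToType → I, StrictMono g ∧ ∀ x : I, ∃ i, x ≤ g i)
    (hsum : ∀ α β : Ordinal.{0}, 1 ≤ α → α < (Order.succ lam).ord → 1 ≤ β →
      β < (Order.succ lam).ord →
      Nonempty ((ordCopies I α ⊕ₗ (ordCopies I β)ᵒᵈ) ≃o I))
    (S₁ S₂ : Set Ordinal)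
    (hS₁ : S₁ ⊆ {δ | δ < (Order.succ lam).ord ∧ δ.cof = lam})
    (hS₂ : S₂ ⊆ {δ | δ < (Order.succ lam).ord ∧ δ.cof = lam})
    (hstat : IsStationaryIn (S₁ \ S₂) (Order.succ lam).ord) :
    ¬ Nonempty (ISOrd lam I S₁ ≃o ISOrd lam I S₂) := by
  rintro ⟨e⟩
  set θ := (Order.succ lam).ord with hθ
  have hunc' : ℵ₀ ≤ lam := le_of_lt hunc
  have hθreg : (Order.succ lam).IsRegular := Cardinal.isRegular_succ hunc'
  have hθcof : θ.cof = Order.succ lam := hθreg.cof_eq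
  have hθlim : Order.IsSuccLimit θ := Cardinal.isSuccLimit_ord (hunc'.trans (le_of_lt (Order.lt_succ lam)))
  have hlam_lt : lam < Order.succ lam := Order.lt_succ lam
  have hIne : Nonempty I := by
    rw [← Cardinal.mk_ne_zero_iff, hcard]
    exact ne_of_gt (lt_of_lt_of_le Cardinal.aleph0_pos hunc')
  obtain ⟨i₀⟩ := hIne
  -- the closure function
  set F : Ordinal → Ordinal := fun α =>
    max (⨆ x : {x : ISOrd lam I S₁ // rank lam x.fst ≤ α},
          Order.succ (rank lam (e x.1).fst))
        (⨆ y : {y : ISOrd lam I S₂ // rank lam y.fst ≤ α},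
          Order.succ (rank lam (e.symm y.1).fst)) with hF
  have hFlt : ∀ α < θ, F α < θ := by
    intro α hα
    refine max_lt ?_ ?_
    · refine Ordinal.iSup_lt_ord ?_ (fun x => hθlim.succ_lt (rank_lt lam _))
      rw [hθcof]
      exact lt_of_le_of_lt (ISOrd.card_initial_le hcard hunc' hα) hlam_lt
    · refine Ordinal.iSup_lt_ord ?_ (fun x => hθlim.succ_lt (rank_lt lam _))
      rw [hθcof]
      exact lt_of_le_of_lt (ISOrd.card_initial_le hcard hunc' hα) hlam_lt
  have hFkey₁ : ∀ (x : ISOrd lam I S₁) (α : Ordinal), rank lam x.fst ≤ α →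
      rank lam (e x).fst < F α := by
    intro x α hx
    refine lt_of_lt_of_le (Order.lt_succ _) (le_trans ?_ (le_max_left _ _))
    exact Ordinal.le_iSup
      (fun x : {x : ISOrd lam I S₁ // rank lam x.fst ≤ α} =>
        Order.succ (rank lam (e x.1).fst)) ⟨x, hx⟩
  have hFkey₂ : ∀ (y : ISOrd lam I S₂) (α : Ordinal), rank lam y.fst ≤ α →
      rank lam (e.symm y).fst < F α := by
    intro y α hy
    refine lt_of_lt_of_le (Order.lt_succ _) (le_trans ?_ (le_max_right _ _))
    exact Ordinal.le_iSup
      (fun y : {y : ISOrd lam I S₂ // rank lam y.fst ≤ α} =>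
        Order.succ (rank lam (e.symm y.1).fst)) ⟨y, hy⟩
  have hFmono : Monotone F := by
    intro α β hαβ
    refine max_le ?_ ?_
    · refine Ordinal.iSup_le (fun x => ?_)
      refine le_trans ?_ (le_max_left _ _)
      exact Ordinal.le_iSup
        (fun x : {x : ISOrd lam I S₁ // rank lam x.fst ≤ β} =>
          Order.succ (rank lam (e x.1).fst)) ⟨x.1, x.2.trans hαβ⟩
    · refine Ordinal.iSup_le (fun y => ?_)
      refine le_trans ?_ (le_max_right _ _)
      exact Ordinal.le_iSup
        (fun y : {y : ISOrd lam I S₂ // rank lam y.fst ≤ β} =>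
          Order.succ (rank lam (e.symm y.1).fst)) ⟨y.1, y.2.trans hαβ⟩
  -- the club of closure points of F
  set C : Set Ordinal := {δ | δ < θ ∧ ∀ α < δ, F α < δ} with hC
  have hclub : IsClubIn C θ := by
    refine ⟨fun δ hδ => hδ.1, ?_, ?_⟩
    · -- unbounded
      intro α hα
      set a : ℕ → Ordinal := fun n => Nat.rec α (fun _ an => Order.succ (max (F an) an)) n
        with ha
      have haθ : ∀ n, a n < θ := by
        intro n
        induction n with
        | zero => exact hα
        | succ n ih =>
          exact hθlim.succ_lt (max_lt (hFlt _ ih) ih)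
      have hmono : ∀ n, a n < a (n + 1) := fun n =>
        lt_of_le_of_lt (le_max_right _ _) (Order.lt_succ _)
      set δ := ⨆ n, a n with hδdef
      have hδθ : δ < θ := by
        refine Ordinal.iSup_lt_ord ?_ haθ
        rw [hθcof, Cardinal.mk_nat]
        exact hunc.trans hlam_lt
      refine ⟨δ, ⟨hδθ, ?_⟩, Ordinal.le_iSup a 0⟩
      intro β hβ
      obtain ⟨n, hn⟩ := Ordinal.lt_iSup_iff.mp hβ
      calc F β ≤ F (a n) := hFmono (le_of_lt hn)
        _ < a (n + 1) := lt_of_le_of_lt (le_max_left _ _) (Order.lt_succ _)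
        _ ≤ δ := Ordinal.le_iSup a (n + 1)
    · -- closed
      intro δ hδθ hδlim hcl
      refine ⟨hδθ, fun α hα => ?_⟩
      obtain ⟨β, hβC, hαβ, hβδ⟩ := hcl (Order.succ α) (hδlim.succ_lt hα)
      exact lt_of_lt_of_le (hβC.2 α (lt_of_lt_of_le (Order.lt_succ α) hαβ)) (le_of_lt hβδ)
  obtain ⟨δ, hδS, hδC⟩ := hstat C hclub
  -- the transfer property at δ
  have hP : ∀ x : ISOrd lam I S₁, rank lam x.fst < δ ↔ rank lam (e x).fst < δ := by
    intro x
    constructor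
    · intro h
      exact lt_trans (hFkey₁ x _ le_rfl) (hδC.2 _ h)
    · intro h
      have h3 : rank lam (e.symm (e x)).fst < δ :=
        lt_trans (hFkey₂ (e x) _ le_rfl) (hδC.2 _ h)
      rwa [OrderIso.symm_apply_apply] at h3
  have hP' : ∀ y : ISOrd lam I S₂, rank lam y.fst < δ ↔ rank lam (e.symm y).fst < δ := by
    intro y
    have := hP (e.symm y)
    rw [OrderIso.apply_symm_apply] at this
    exact this.symm
  obtain ⟨hδ₁, hδ₂⟩ := hδS
  have hδθ' : δ < θ := (hS₁ hδ₁).1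
  obtain ⟨a, ha⟩ := exists_rank_eq lam hδθ'
  have haS₁ : rank lam a ∈ S₁ := by rw [ha]; exact hδ₁
  have haS₂ : rank lam a ∉ S₂ := by rw [ha]; exact hδ₂
  -- the coinitial ω-sequence above the cut at δ on the S₁ side
  set y : ℕ → ISOrd lam I S₁ := fun n => ISOrd.mk a (Fiber.left haS₁ (n, i₀)) with hy
  have hyfst : ∀ n, (y n).fst = a := fun n => rfl
  have hydec : ∀ n, y (n + 1) < y n := by
    intro n
    rw [hy]
    refine ISOrd.mk_lt_mk_iff.mpr ?_
    rw [Fiber.left_lt_left_iff]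
    rw [Prod.Lex.lt_iff]
    exact Or.inl (Nat.lt_succ_self n)
  have hyco : ∀ z : ISOrd lam I S₁, δ ≤ rank lam z.fst → ∃ n, y n ≤ z := by
    intro z hz
    rcases eq_or_lt_of_le hz with h | h
    · -- z is in block δ
      have hza : z.fst = a := (rank_inj lam (ha.trans h)).symm
      obtain ⟨n, hn⟩ := ISOrd.exists_left_le haS₁ i₀ z hza
      exact ⟨n, by rw [hy]; exact hn⟩
    · refine ⟨0, le_of_lt (ISOrd.lt_of_fst_lt ((rank_lt_rank_iff lam).mp ?_))⟩
      rw [hy, ISOrd.mk_fst, ha]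
      exact h
  -- transfer the sequence to the S₂ side
  set w' : ℕ → ISOrd lam I S₂ := fun n => e (y n) with hw'
  have hwdec : ∀ n, w' (n + 1) < w' n := fun n => e.lt_iff_lt.mpr (hydec n)
  have hwanti : ∀ m n, m ≤ n → w' n ≤ w' m := by
    intro m n hmn
    induction hmn with
    | refl => exact le_rfl
    | step _ ih => exact (le_of_lt (hwdec _)).trans ih
  have hwrank : ∀ n, δ ≤ rank lam (w' n).fst := by
    intro n
    by_contra hcon
    have h1 : rank lam (e (y n)).fst < δ := lt_of_not_ge (by rw [hw'] at hcon; exact hcon)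
    have h2 : rank lam (y n).fst < δ := (hP (y n)).mpr h1
    rw [hy, ISOrd.mk_fst, ha] at h2
    exact absurd h2 (lt_irrefl δ)
  have hwco : ∀ z : ISOrd lam I S₂, δ ≤ rank lam z.fst → ∃ n, w' n ≤ z := by
    intro z hz
    have hz' : δ ≤ rank lam (e.symm z).fst := by
      by_contra hcon
      have := (hP' z).mpr (lt_of_not_ge hcon)
      exact absurd hz (not_le_of_gt this)
    obtain ⟨n, hn⟩ := hyco (e.symm z) hz'
    refine ⟨n, ?_⟩
    rw [hw']
    calc e (y n) ≤ e (e.symm z) := e.le_iff_le.mpr hn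
      _ = z := e.apply_symm_apply z
  -- the coinitial λ-sequence of I
  obtain ⟨r⟩ := hrev
  obtain ⟨g, hg, hgcof⟩ := hcof
  set g' : lam.ord.ToType → I := fun i => r.symm (OrderDual.toDual (g i)) with hg'
  have hanti : ∀ i j, i < j → g' j < g' i := by
    intro i j hij
    rw [hg']
    exact r.symm.lt_iff_lt.mpr (OrderDual.toDual_lt_toDual.mpr (hg hij))
  have hcoi : ∀ x : I, ∃ i, g' i ≤ x := by
    intro x
    obtain ⟨i, hi⟩ := hgcof (OrderDual.ofDual (r x))
    refine ⟨i, ?_⟩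
    rw [hg']
    have h1 : OrderDual.toDual (g i) ≤ r x := hi
    calc r.symm (OrderDual.toDual (g i)) ≤ r.symm (r x) := r.symm.le_iff_le.mpr h1
      _ = x := r.symm_apply_apply x
  -- case analysis on whether the sequence w' enters block δ
  by_cases hcase : ∀ n, δ < rank lam (w' n).fst
  · obtain ⟨n, hn⟩ := hwco (ISOrd.mk a (Fiber.right haS₂ i₀))
      (by rw [ISOrd.mk_fst, ha])
    have hlt : ISOrd.mk a (Fiber.right haS₂ i₀) < w' n :=
      ISOrd.lt_of_fst_lt ((rank_lt_rank_iff lam).mp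
        (by rw [ISOrd.mk_fst, ha]; exact hcase n))
    exact absurd hn (not_le_of_gt hlt)
  · push_neg at hcase
    obtain ⟨N, hN⟩ := hcase
    have hNfst : ∀ k, (w' (N + k)).fst = a := by
      intro k
      refine (rank_inj lam ?_).symm
      rw [ha]
      refine le_antisymm (hwrank (N + k)) ?_
      calc rank lam (w' (N + k)).fst ≤ rank lam (w' N).fst :=
            (rank_le_rank_iff lam).mpr (ISOrd.fst_le_of_le (hwanti N (N + k) (Nat.le_add_right N k)))
        _ ≤ δ := hN
    choose v hv using fun k => ISOrd.eq_right_of_fst haS₂ (w' (N + k)) (hNfst k)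
    have hvdec : ∀ k, v (k + 1) < v k := by
      intro k
      have h1 : w' (N + (k + 1)) < w' (N + k) := hwdec (N + k)
      rw [hv (k + 1), hv k, ISOrd.mk_lt_mk_iff, Fiber.right_lt_right_iff] at h1
      exact h1
    have hvco : ∀ x : I, ∃ k, v k ≤ x := by
      intro x
      obtain ⟨n, hn⟩ := hwco (ISOrd.mk a (Fiber.right haS₂ x))
        (by rw [ISOrd.mk_fst, ha])
      refine ⟨n, ?_⟩
      have h1 : w' (N + n) ≤ ISOrd.mk a (Fiber.right haS₂ x) :=
        (hwanti n (N + n) (Nat.le_add_left n N)).trans hn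
      rw [hv n, ISOrd.mk_le_mk_iff, Fiber.right_le_right_iff] at h1
      exact h1
    exact no_countable_coinitial hreg hunc g' hanti hcoi v hvdec hvco

end ISOrders
end

section
/- Let M₁ and M₂ be suitable structures in the vocabulary {E_n : n < ω}, and for ℓ = 1,2 let (𝒯_ℓ, ⟨a^ℓ_η : η ∈ 𝒯_ℓ⟩) be a representation of M_ℓ. Then M₁ and M₂ are isomorphic if and only if there is a tree isomorphism h : 𝒯₁ → 𝒯₂ (a bijection preserving lengths of sequences and preserving the initial-segment relation and its negation) such that for every ω-branch η of 𝒯₁, μ¹_η = μ²_{h_ω(η)}, where h_ω(η) is the ω-branch of 𝒯₂ whose restriction to n equals h(η↾n) for all n, and μ^ℓ denotes the branch multiplicity function of M_ℓ. -/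
open Cardinal

namespace SuitableStructures

/-- A suitable structure in the vocabulary `{E_n : n < ω}`:  each `E_n` is an equivalence
relation, `E_0` is total, and `E_{n+1}` refines `E_n`. -/
structure SuitStruct : Type 1 where
  carrier : Type
  E : ℕ → carrier → carrier → Prop
  equiv : ∀ n, Equivalence (E n)
  total0 : ∀ x y, E 0 x y
  refines : ∀ n x y, E (n + 1) x y → E n x y

/-- The sequence `⟨η(0), …, η(n-1)⟩` as a list. -/
def take (n : ℕ) (η : ℕ → Ordinal.{0}) : List Ordinal.{0} := List.ofFn fun i : Fin n => η i

/-- A representation `(𝒯, ⟨a_η : η ∈ 𝒯⟩)` of a suitable structure `M`:  `𝒯` is a tree of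
finite sequences of ordinals, and for each node `η` of length `n` the `E_{n+1}`-classes of
the values at the immediate successors of `η` enumerate, without repetition, exactly the
`E_{n+1}`-classes included in `a_η / E_n`. -/
structure Repres (M : SuitStruct) : Type 1 where
  tree : Set (List Ordinal.{0})
  node : List Ordinal.{0} → M.carrier
  nil_mem : [] ∈ tree
  prefix_closed : ∀ l ∈ tree, ∀ l' : List Ordinal.{0}, l' <+: l → l' ∈ tree
  succ_rel : ∀ l ∈ tree, ∀ x : Ordinal.{0}, l ++ [x] ∈ tree →
    M.E l.length (node (l ++ [x])) (node l)
  succ_inj : ∀ l ∈ tree, ∀ x y : Ordinal.{0}, l ++ [x] ∈ tree → l ++ [y] ∈ tree → x ≠ y →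
    ¬ M.E (l.length + 1) (node (l ++ [x])) (node (l ++ [y]))
  succ_surj : ∀ l ∈ tree, ∀ b : M.carrier, M.E l.length b (node l) →
    ∃ x : Ordinal.{0}, l ++ [x] ∈ tree ∧ M.E (l.length + 1) b (node (l ++ [x]))

/-- The branch multiplicity `μ_η` of an `ω`-branch `η` of the tree of a representation:
the number of elements lying in all the classes `a_{η↾n}/E_n`. -/
noncomputable def branchMult {M : SuitStruct} (R : Repres M) (η : ℕ → Ordinal.{0}) : Cardinal :=
  #{b : M.carrier // ∀ n, M.E n b (R.node (take n η))}

/-! A representation identifies the nodes of level `n` of its tree with the `E_n`-classes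
(the node `l` with the class of `a_l`), and the prefix order with inclusion of classes. Hence
every element lies on exactly one `ω`-branch, two elements are `E_n`-equivalent iff their
branches agree up to level `n`, and the structure is the disjoint union, over the branches `η`,
of fibres of size `μ_η`. An isomorphism `e` therefore induces a tree isomorphism (send `l` to the
node whose class contains `e a_l`) matching the multiplicities; conversely a tree isomorphism
induces a bijection of branches, and bijections between the fibres of equal size glue to an
isomorphism. -/

universe u

theorem exists_equiv_map_eq_of_mk_fiber_eq {X₁ X₂ : Type u} {B₁ B₂ : Type*}
    (f₁ : X₁ → B₁) (f₂ : X₂ → B₂) (H : B₁ ≃ B₂)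
    (hmk : ∀ b, #{x // f₁ x = b} = #{x // f₂ x = H b}) :
    ∃ e : X₁ ≃ X₂, ∀ x, f₂ (e x) = H (f₁ x) := by
  let F : ∀ b, {x // f₁ x = b} ≃ {x // f₂ x = H b} := fun b => (Cardinal.eq.mp (hmk b)).some
  refine ⟨(Equiv.sigmaFiberEquiv f₁).symm.trans
    ((Equiv.sigmaCongr H F).trans (Equiv.sigmaFiberEquiv f₂)), fun x => ?_⟩
  exact (F (f₁ x) ⟨x, rfl⟩).2

namespace SuitStruct

variable {M₁ M₂ : SuitStruct}

theorem E_refl (M : SuitStruct) (n : ℕ) (x : M.carrier) : M.E n x x := (M.equiv n).refl x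

theorem E_symm (M : SuitStruct) {n : ℕ} {x y : M.carrier} (h : M.E n x y) : M.E n y x :=
  (M.equiv n).symm h

theorem E_trans (M : SuitStruct) {n : ℕ} {x y z : M.carrier} (h : M.E n x y) (h' : M.E n y z) :
    M.E n x z :=
  (M.equiv n).trans h h'

theorem E_congr (M : SuitStruct) {n : ℕ} {x x' y y' : M.carrier} (hx : M.E n x x')
    (hy : M.E n y y') : M.E n x y ↔ M.E n x' y' :=
  ⟨fun h => M.E_trans (M.E_trans (M.E_symm hx) h) hy,
    fun h => M.E_trans (M.E_trans hx h) (M.E_symm hy)⟩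

theorem E_of_le (M : SuitStruct) {k m : ℕ} (hkm : k ≤ m) {x y : M.carrier} (h : M.E m x y) :
    M.E k x y := by
  induction hkm with
  | refl => exact h
  | step _ ih => exact ih (M.refines _ _ _ h)

def PreservesE (e : M₁.carrier ≃ M₂.carrier) : Prop :=
  ∀ n x y, M₁.E n x y ↔ M₂.E n (e x) (e y)

theorem PreservesE.symm {e : M₁.carrier ≃ M₂.carrier} (he : PreservesE e) :
    PreservesE e.symm := fun n x y => by
  rw [he n, Equiv.apply_symm_apply, Equiv.apply_symm_apply]

end SuitStruct

@[simp] theorem length_take (n : ℕ) (η : ℕ → Ordinal.{0}) : (take n η).length = n := by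
  simp [take]

theorem take_succ (n : ℕ) (η : ℕ → Ordinal.{0}) : take (n + 1) η = take n η ++ [η n] := by
  rw [take, take, List.ofFn_succ']
  simp [List.concat_eq_append]

theorem eq_of_forall_take_eq {η ν : ℕ → Ordinal.{0}} (h : ∀ n, take n η = take n ν) : η = ν := by
  funext n
  simpa [take_succ, h n] using h (n + 1)

theorem exists_forall_take_eq_of_chain (G : ℕ → List Ordinal.{0}) (hlen : ∀ n, (G n).length = n)
    (hG : ∀ n, G n <+: G (n + 1)) : ∃ η : ℕ → Ordinal.{0}, ∀ n, take n η = G n := by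
  have hstep : ∀ n, ∃ x, G (n + 1) = G n ++ [x] := fun n => by
    obtain ⟨t, ht⟩ := hG n
    obtain ⟨x, rfl⟩ : ∃ x, t = [x] :=
      List.length_eq_one_iff.mp (by simpa [hlen] using congrArg List.length ht)
    exact ⟨x, ht.symm⟩
  choose η hη using hstep
  refine ⟨η, fun n => ?_⟩
  induction n with
  | zero => exact (List.length_eq_zero_iff.mp (hlen 0)).symm
  | succ n ih => rw [take_succ, ih, hη n]

namespace Repres

variable {M : SuitStruct} (R : Repres M)

theorem mem_of_append_mem {l : List Ordinal.{0}} {x : Ordinal.{0}} (h : l ++ [x] ∈ R.tree) :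
    l ∈ R.tree :=
  R.prefix_closed _ h l (List.prefix_append _ _)

theorem eq_of_E_node {l l' : List Ordinal.{0}} (hl : l ∈ R.tree) (hl' : l' ∈ R.tree)
    (hlen : l.length = l'.length) (hE : M.E l.length (R.node l) (R.node l')) : l = l' := by
  induction l using List.reverseRecOn generalizing l' with
  | nil => exact (List.length_eq_zero_iff.mp hlen.symm).symm
  | append_singleton l x ih =>
    obtain rfl | ⟨l', x', rfl⟩ := l'.eq_nil_or_concat'
    · simp at hlen
    have hlen' : l.length = l'.length := by simpa using hlen
    have hm := R.mem_of_append_mem hl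
    have hm' := R.mem_of_append_mem hl'
    have hE' : M.E (l.length + 1) (R.node (l ++ [x])) (R.node (l' ++ [x'])) := by simpa using hE
    obtain rfl : l = l' := ih hm hm' hlen' <| (M.E_congr (R.succ_rel l hm x hl)
      (hlen' ▸ R.succ_rel l' hm' x' hl')).mp (M.E_of_le (Nat.le_succ _) hE')
    by_contra hne
    exact R.succ_inj l hm x x' hl hl' (fun h => hne (h ▸ rfl)) hE'

theorem E_node_of_prefix {l l' : List Ordinal.{0}} (hl : l ∈ R.tree) (hpre : l' <+: l) :
    M.E l'.length (R.node l) (R.node l') := by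
  induction l using List.reverseRecOn with
  | nil => rw [List.prefix_nil.mp hpre]; exact M.E_refl _ _
  | append_singleton l x ih =>
    rcases List.prefix_concat_iff.mp hpre with rfl | hpre
    · exact M.E_refl _ _
    have hm := R.mem_of_append_mem hl
    exact M.E_trans (M.E_of_le hpre.length_le (R.succ_rel l hm x hl)) (ih hm hpre)

theorem prefix_iff {l l' : List Ordinal.{0}} (hl : l ∈ R.tree) (hl' : l' ∈ R.tree) :
    l <+: l' ↔ l.length ≤ l'.length ∧ M.E l.length (R.node l) (R.node l') := by
  refine ⟨fun h => ⟨h.length_le, M.E_symm (R.E_node_of_prefix hl' h)⟩, fun ⟨hle, hE⟩ => ?_⟩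
  have htake : l'.take l.length <+: l' := List.take_prefix _ _
  have hlen : (l'.take l.length).length = l.length := by simpa using hle
  have hE' := R.E_node_of_prefix hl' htake
  rw [hlen] at hE'
  rw [R.eq_of_E_node hl (R.prefix_closed _ hl' _ htake) hlen.symm (M.E_trans hE hE')]
  exact htake

theorem exists_node_E (b : M.carrier) (n : ℕ) :
    ∃ l ∈ R.tree, l.length = n ∧ M.E n b (R.node l) := by
  induction n with
  | zero => exact ⟨[], R.nil_mem, rfl, M.total0 _ _⟩
  | succ n ih =>
    obtain ⟨l, hl, rfl, hE⟩ := ih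
    obtain ⟨x, hx, hEx⟩ := R.succ_surj l hl b hE
    exact ⟨l ++ [x], hx, by simp, hEx⟩

theorem exists_branch_E (b : M.carrier) :
    ∃ η : ℕ → Ordinal.{0}, (∀ n, take n η ∈ R.tree) ∧ ∀ n, M.E n b (R.node (take n η)) := by
  choose G hG hlen hE using R.exists_node_E b
  have hchain : ∀ n, G n <+: G (n + 1) := fun n =>
    (R.prefix_iff (hG n) (hG (n + 1))).mpr ⟨by simp [hlen], by
      rw [hlen]; exact M.E_trans (M.E_symm (hE n)) (M.E_of_le (Nat.le_succ n) (hE (n + 1)))⟩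
  obtain ⟨η, hη⟩ := exists_forall_take_eq_of_chain G hlen hchain
  exact ⟨η, fun n => hη n ▸ hG n, fun n => hη n ▸ hE n⟩

abbrev Branch : Type 1 := {η : ℕ → Ordinal.{0} // ∀ n, take n η ∈ R.tree}

noncomputable def branchOf (b : M.carrier) : R.Branch :=
  ⟨(R.exists_branch_E b).choose, (R.exists_branch_E b).choose_spec.1⟩

theorem E_node_branchOf (b : M.carrier) (n : ℕ) :
    M.E n b (R.node (take n (R.branchOf b).1)) :=
  (R.exists_branch_E b).choose_spec.2 n

theorem take_branchOf_eq_iff {c : M.carrier} {m : List Ordinal.{0}} (hm : m ∈ R.tree) :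
    take m.length (R.branchOf c).1 = m ↔ M.E m.length c (R.node m) := by
  refine ⟨fun h => ?_, fun h => ?_⟩
  · have := R.E_node_branchOf c m.length
    rwa [h] at this
  refine R.eq_of_E_node ((R.branchOf c).2 _) hm (length_take _ _) ?_
  rw [length_take]
  exact M.E_trans (M.E_symm (R.E_node_branchOf c _)) h

theorem branchOf_eq_iff {b : M.carrier} {η : R.Branch} :
    R.branchOf b = η ↔ ∀ n, M.E n b (R.node (take n η.1)) := by
  refine ⟨fun h => h ▸ R.E_node_branchOf b, fun h => Subtype.ext ?_⟩
  refine eq_of_forall_take_eq fun n => ?_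
  simpa using (R.take_branchOf_eq_iff (η.2 n)).mpr (by simpa using h n)

theorem E_iff_take_branchOf (n : ℕ) (b c : M.carrier) :
    M.E n b c ↔ take n (R.branchOf b).1 = take n (R.branchOf c).1 := by
  have := R.take_branchOf_eq_iff (c := b) ((R.branchOf c).2 n)
  rw [length_take] at this
  rw [this]
  exact M.E_congr (M.E_refl n b) (R.E_node_branchOf c n)

theorem mk_branchOf_eq (η : R.Branch) : #{b // R.branchOf b = η} = branchMult R η.1 :=
  mk_congr (Equiv.subtypeEquivRight fun _ => R.branchOf_eq_iff)

end Repres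

section TreeMap

open SuitStruct

variable {M₁ M₂ : SuitStruct} (R₁ : Repres M₁) (R₂ : Repres M₂) (e : M₁.carrier ≃ M₂.carrier)

noncomputable def treeMap (l : List Ordinal.{0}) : List Ordinal.{0} :=
  take l.length (R₂.branchOf (e (R₁.node l))).1

variable {R₁ R₂ e}

theorem treeMap_mem (l : List Ordinal.{0}) : treeMap R₁ R₂ e l ∈ R₂.tree :=
  (R₂.branchOf _).2 _

@[simp] theorem length_treeMap (l : List Ordinal.{0}) : (treeMap R₁ R₂ e l).length = l.length :=
  length_take _ _

theorem E_node_treeMap (l : List Ordinal.{0}) :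
    M₂.E l.length (e (R₁.node l)) (R₂.node (treeMap R₁ R₂ e l)) :=
  R₂.E_node_branchOf _ _

theorem treeMap_eq_iff {l m : List Ordinal.{0}} (hm : m ∈ R₂.tree) (hlen : m.length = l.length) :
    treeMap R₁ R₂ e l = m ↔ M₂.E l.length (e (R₁.node l)) (R₂.node m) := by
  rw [treeMap, ← hlen]
  exact R₂.take_branchOf_eq_iff hm

theorem treeMap_symm_treeMap (he : PreservesE e) {l : List Ordinal.{0}} (hl : l ∈ R₁.tree) :
    treeMap R₂ R₁ e.symm (treeMap R₁ R₂ e l) = l := by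
  rw [treeMap_eq_iff hl (length_treeMap l).symm, length_treeMap, he, Equiv.apply_symm_apply]
  exact M₂.E_symm (E_node_treeMap l)

theorem treeMap_prefix_treeMap_iff (he : PreservesE e) {l l' : List Ordinal.{0}}
    (hl : l ∈ R₁.tree) (hl' : l' ∈ R₁.tree) :
    treeMap R₁ R₂ e l <+: treeMap R₁ R₂ e l' ↔ l <+: l' := by
  rw [R₁.prefix_iff hl hl', R₂.prefix_iff (treeMap_mem l) (treeMap_mem l'), length_treeMap,
    length_treeMap]
  refine and_congr_right fun hle => ?_
  rw [he]
  exact M₂.E_congr (M₂.E_symm (E_node_treeMap l))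
    (M₂.E_symm (M₂.E_of_le hle (E_node_treeMap l')))

theorem branchMult_eq_of_treeMap_take (he : PreservesE e) {η ν : ℕ → Ordinal.{0}}
    (hην : ∀ n, treeMap R₁ R₂ e (take n η) = take n ν) : branchMult R₁ η = branchMult R₂ ν := by
  refine mk_congr (e.subtypeEquiv fun b => forall_congr' fun n => ?_)
  have hnode := E_node_treeMap (R₁ := R₁) (R₂ := R₂) (e := e) (take n η)
  rw [length_take, hην] at hnode
  rw [he]
  exact M₂.E_congr (M₂.E_refl n (e b)) hnode

noncomputable def treeEquiv (he : PreservesE e) : {l // l ∈ R₁.tree} ≃ {l // l ∈ R₂.tree} where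
  toFun l := ⟨treeMap R₁ R₂ e l, treeMap_mem l⟩
  invFun m := ⟨treeMap R₂ R₁ e.symm m, treeMap_mem m⟩
  left_inv l := Subtype.ext (treeMap_symm_treeMap he l.2)
  right_inv m := Subtype.ext (by simpa using treeMap_symm_treeMap he.symm m.2)

end TreeMap

section BranchMap

variable {M₁ M₂ : SuitStruct} {R₁ : Repres M₁} {R₂ : Repres M₂}

theorem exists_branch_map_take (g : {l // l ∈ R₁.tree} → {l // l ∈ R₂.tree})
    (hlen : ∀ l, (g l).1.length = l.1.length)
    (hpre : ∀ l l' : {l // l ∈ R₁.tree}, l.1 <+: l'.1 → (g l).1 <+: (g l').1)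
    (η : R₁.Branch) : ∃ ν : R₂.Branch, ∀ n, (g ⟨take n η.1, η.2 n⟩).1 = take n ν.1 := by
  obtain ⟨ν, hν⟩ := exists_forall_take_eq_of_chain (fun n => (g ⟨take n η.1, η.2 n⟩).1)
    (fun n => by rw [hlen, length_take])
    (fun n => hpre _ _ (by simp only [take_succ, List.prefix_append]))
  exact ⟨⟨ν, fun n => hν n ▸ (g _).2⟩, fun n => (hν n).symm⟩

theorem exists_branchEquiv (h : {l // l ∈ R₁.tree} ≃ {l // l ∈ R₂.tree})
    (hlen : ∀ l, (h l).1.length = l.1.length)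
    (hpre : ∀ l l' : {l // l ∈ R₁.tree}, l.1 <+: l'.1 ↔ (h l).1 <+: (h l').1) :
    ∃ H : R₁.Branch ≃ R₂.Branch, ∀ η n, (h ⟨take n η.1, η.2 n⟩).1 = take n (H η).1 := by
  choose Φ hΦ using exists_branch_map_take h hlen fun l l' => (hpre l l').mp
  have hlen' : ∀ m, (h.symm m).1.length = m.1.length := fun m => by
    simpa using (hlen (h.symm m)).symm
  have hpre' : ∀ m m' : {l // l ∈ R₂.tree}, m.1 <+: m'.1 → (h.symm m).1 <+: (h.symm m').1 :=
    fun m m' => by simpa using (hpre (h.symm m) (h.symm m')).mpr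
  refine ⟨Equiv.ofBijective Φ ⟨fun η η' hΦη => ?_, fun ν => ?_⟩, hΦ⟩
  · refine Subtype.ext (eq_of_forall_take_eq fun n => ?_)
    have := (hΦ η n).trans ((congrArg (take n ∘ Subtype.val) hΦη).trans (hΦ η' n).symm)
    simpa using h.injective (Subtype.ext this)
  · obtain ⟨η, hη⟩ := exists_branch_map_take h.symm hlen' hpre' ν
    refine ⟨η, Subtype.ext (eq_of_forall_take_eq fun n => ?_)⟩
    rw [← hΦ η n]
    have : (⟨take n η.1, η.2 n⟩ : {l // l ∈ R₁.tree}) = h.symm ⟨take n ν.1, ν.2 n⟩ :=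
      Subtype.ext (hη n).symm
    rw [this, Equiv.apply_symm_apply]

end BranchMap

/-- `⊛` of Step C in the proof of Claim 1a.11.  Two suitable structures
with representations are isomorphic iff there is a tree isomorphism between the
representing trees matching the multiplicities of all `ω`-branches. -/
theorem isomorphic_iff_tree_isomorphism
    (M₁ M₂ : SuitStruct) (R₁ : Repres M₁) (R₂ : Repres M₂) :
    (∃ e : M₁.carrier ≃ M₂.carrier, ∀ n x y, M₁.E n x y ↔ M₂.E n (e x) (e y)) ↔
    (∃ h : {l // l ∈ R₁.tree} ≃ {l // l ∈ R₂.tree},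
      (∀ l : {l // l ∈ R₁.tree}, (h l : List Ordinal.{0}).length = (l : List Ordinal.{0}).length) ∧
      (∀ l l' : {l // l ∈ R₁.tree},
        ((l : List Ordinal.{0}) <+: (l' : List Ordinal.{0})) ↔
          ((h l : List Ordinal.{0}) <+: (h l' : List Ordinal.{0}))) ∧
      ∀ (η : ℕ → Ordinal.{0}) (hη : ∀ n, take n η ∈ R₁.tree)
        (ν : ℕ → Ordinal.{0}) (hν : ∀ n, take n ν ∈ R₂.tree),
        (∀ n, (h ⟨take n η, hη n⟩ : List Ordinal.{0}) = take n ν) →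
        branchMult R₁ η = branchMult R₂ ν) := by
  constructor
  · rintro ⟨e, he⟩
    refine ⟨treeEquiv he, fun l => length_treeMap l.1,
      fun l l' => (treeMap_prefix_treeMap_iff he l.2 l'.2).symm,
      fun η _ ν _ hην => branchMult_eq_of_treeMap_take he hην⟩
  · rintro ⟨h, hlen, hpre, hmult⟩
    obtain ⟨H, hH⟩ := exists_branchEquiv h hlen hpre
    obtain ⟨e, he⟩ := exists_equiv_map_eq_of_mk_fiber_eq R₁.branchOf R₂.branchOf H fun η => by
      rw [R₁.mk_branchOf_eq, R₂.mk_branchOf_eq]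
      exact hmult η.1 η.2 (H η).1 (H η).2 (hH η)
    refine ⟨e, fun n b c => ?_⟩
    rw [R₁.E_iff_take_branchOf, R₂.E_iff_take_branchOf, he, he, ← hH, ← hH,
      ← Subtype.ext_iff, h.injective.eq_iff, Subtype.mk.injEq]

end SuitableStructures
end
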